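/- arXiv:2501.15633 — 5 statements merged into one kernel-verified Lean document; each statement's English description precedes it below -/
import Mathlib

section
/- Let ξ : ℕ → ℝ be a real sequence such that limsup_{n→∞} n^{-1} ∑_{k=0}^n |ξ(k)| = R < ∞ and lim_{n→∞} n^{-1} ∑_{k=0}^n ξ(k) = Q exists. Then for every ν ≥ 1, lim_{n→∞} n^{-ν} ∑_{0 ≤ k_1 < k_2 < ... < k_ν < n} ξ(k_1) ξ(k_2) ⋯ ξ(k_ν) = Q^ν / ν!. -/
open Filter Finset Topology

/-- The iterated sum `Σ^{(ν)}(n) = ∑_{0 ≤ k_1 < ... < k_ν < n} ξ(k_1) ⋯ ξ(k_ν)`. -/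
noncomputable def iterSum (ξ : ℕ → ℝ) (ν n : ℕ) : ℝ :=
  ∑ k ∈ Finset.univ.filter (fun k : Fin ν → Fin n => ∀ i j : Fin ν, i < j → k i < k j),
    ∏ j : Fin ν, ξ (k j)

/-- Sum over `ν`-element subsets of `range n`. -/
noncomputable def esum (ξ : ℕ → ℝ) (ν n : ℕ) : ℝ :=
  ∑ s ∈ (Finset.range n).powersetCard ν, ∏ k ∈ s, ξ k

lemma iterSum_eq_esum (ξ : ℕ → ℝ) (ν n : ℕ) : iterSum ξ ν n = esum ξ ν n := by
  classical
  unfold iterSum esum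
  refine Finset.sum_bij' (fun f _ => Finset.univ.image (fun j => ((f j : ℕ))))
    (fun s hs => fun i => ⟨s.orderEmbOfFin (Finset.mem_powersetCard.1 hs).2 i,
      Finset.mem_range.1 ((Finset.mem_powersetCard.1 hs).1 (Finset.orderEmbOfFin_mem _ _ _))⟩)
    ?_ ?_ ?_ ?_ ?_
  · intro f hf
    rw [Finset.mem_filter] at hf
    have hmono : StrictMono f := fun i j h => hf.2 i j h
    rw [Finset.mem_powersetCard]
    constructor
    · intro x hx
      rcases Finset.mem_image.1 hx with ⟨j, _, rfl⟩
      exact Finset.mem_range.2 (f j).2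
    · rw [Finset.card_image_of_injective _ (fun i j hij => hmono.injective (Fin.val_injective hij)),
        Finset.card_univ, Fintype.card_fin]
  · intro s hs
    rw [Finset.mem_filter]
    refine ⟨Finset.mem_univ _, fun i j hij => ?_⟩
    exact Fin.mk_lt_mk.2 ((s.orderEmbOfFin (Finset.mem_powersetCard.1 hs).2).strictMono hij)
  · intro f hf
    rw [Finset.mem_filter] at hf
    have hmono : StrictMono (fun j => ((f j : ℕ))) := fun i j h => hf.2 i j h
    have hcard : (Finset.univ.image (fun j => ((f j : ℕ)))).card = ν := by
      rw [Finset.card_image_of_injective _ hmono.injective, Finset.card_univ, Fintype.card_fin]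
    funext i
    have := Finset.orderEmbOfFin_unique (f := fun j => ((f j : ℕ))) hcard
      (fun x => Finset.mem_image_of_mem _ (Finset.mem_univ x)) hmono
    apply Fin.ext
    simp only
    exact (congrFun this i).symm
  · intro s hs
    have h2 := (Finset.mem_powersetCard.1 hs).2
    apply Finset.eq_of_subset_of_card_le
    · intro x hx
      rcases Finset.mem_image.1 hx with ⟨j, _, rfl⟩
      exact Finset.orderEmbOfFin_mem _ _ _
    · have hinj : Function.Injective fun j : Fin ν => ((s.orderEmbOfFin h2 j : ℕ)) :=
        fun i j hij => (s.orderEmbOfFin h2).injective hij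
      have hc : ∀ t : Finset ℕ,
          t = Finset.univ.image (fun j : Fin ν => ((s.orderEmbOfFin h2 j : ℕ))) → #s ≤ #t := by
        rintro t rfl
        rw [Finset.card_image_of_injective _ hinj, Finset.card_univ, Fintype.card_fin, h2]
      exact hc _ rfl
  · intro f hf
    rw [Finset.mem_filter] at hf
    have hmono : StrictMono (fun j => ((f j : ℕ))) := fun i j h => hf.2 i j h
    rw [Finset.prod_image]
    intro i _ j _ hij
    exact hmono.injective hij

lemma esum_zero (ξ : ℕ → ℝ) (n : ℕ) : esum ξ 0 n = 1 := by
  simp [esum]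

lemma esum_succ_succ (ξ : ℕ → ℝ) (ν n : ℕ) :
    esum ξ (ν + 1) (n + 1) = esum ξ (ν + 1) n + ξ n * esum ξ ν n := by
  classical
  unfold esum
  rw [Finset.range_add_one, Finset.powersetCard_succ_insert (Finset.notMem_range_self)]
  rw [Finset.sum_union]
  · congr 1
    rw [Finset.sum_image, Finset.mul_sum]
    · apply Finset.sum_congr rfl
      intro s hs
      rw [Finset.prod_insert]
      intro hn
      exact Finset.notMem_range_self ((Finset.mem_powersetCard.1 hs).1 hn)
    · intro s hs t ht hst
      have hns : n ∉ s := fun hn => Finset.notMem_range_self ((Finset.mem_powersetCard.1 hs).1 hn)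
      have hnt : n ∉ t := fun hn => Finset.notMem_range_self ((Finset.mem_powersetCard.1 ht).1 hn)
      rw [← Finset.erase_insert hns, ← Finset.erase_insert hnt, hst]
  · rw [Finset.disjoint_right]
    intro s hs hs'
    rcases Finset.mem_image.1 hs with ⟨t, _, rfl⟩
    exact Finset.notMem_range_self ((Finset.mem_powersetCard.1 hs').1 (Finset.mem_insert_self n t))

lemma esum_succ_eq_sum (ξ : ℕ → ℝ) (ν n : ℕ) :
    esum ξ (ν + 1) n = ∑ m ∈ Finset.range n, ξ m * esum ξ ν m := by
  induction n with
  | zero =>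
    have h : (∅ : Finset ℕ).powersetCard (ν + 1) = ∅ :=
      Finset.powersetCard_eq_empty.2 (by simp)
    simp [esum, h]
  | succ n ih => rw [esum_succ_succ, ih, Finset.sum_range_succ]

lemma bern_upper (p : ℕ) {x : ℝ} (hx : 0 ≤ x) :
    x ^ (p + 1) + (p + 1) * x ^ p ≤ (x + 1) ^ (p + 1) := by
  rw [add_pow]
  have hsub : ({p, p + 1} : Finset ℕ) ⊆ Finset.range (p + 2) := by
    intro k hk
    simp only [Finset.mem_insert, Finset.mem_singleton] at hk
    rcases hk with rfl | rfl <;> simp [Finset.mem_range]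
  have hkey := Finset.sum_le_sum_of_subset_of_nonneg
    (f := fun k => x ^ k * 1 ^ (p + 1 - k) * (((p + 1).choose k : ℕ) : ℝ)) hsub
    (fun k _ _ => by positivity)
  refine le_trans (le_of_eq ?_) hkey
  rw [Finset.sum_pair (by omega : p ≠ p + 1)]
  have h1 : p + 1 - p = 1 := by omega
  have h2 : p + 1 - (p + 1) = 0 := by omega
  rw [h1, h2, Nat.choose_succ_self_right, Nat.choose_self]
  push_cast
  ring

lemma bern_lower (p : ℕ) {x : ℝ} (hx : 1 ≤ x) :
    x ^ (p + 1) - (x - 1) ^ (p + 1) ≤ (p + 1) * x ^ p := by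
  have hx0 : (0 : ℝ) < x := lt_of_lt_of_le zero_lt_one hx
  have ha : (-2 : ℝ) ≤ -1 / x := by
    have h1 : 1 / x ≤ 1 := by rw [div_le_one hx0]; exact hx
    have h2 : (0:ℝ) < 1 / x := by positivity
    rw [neg_div]; linarith
  have h := one_add_mul_le_pow ha (p + 1)
  have heq : (1 : ℝ) + -1 / x = (x - 1) / x := by field_simp; ring
  rw [heq, div_pow] at h
  have h2 := mul_le_mul_of_nonneg_left h (le_of_lt (pow_pos hx0 (p + 1)))
  rw [mul_div_cancel₀ _ (ne_of_gt (pow_pos hx0 (p + 1)))] at h2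
  have h3 : x ^ (p + 1) * (1 + ((p : ℝ) + 1) * (-1 / x)) =
      x ^ (p + 1) - ((p : ℝ) + 1) * x ^ p := by
    rw [pow_succ]
    field_simp
    ring
  push_cast at h2
  rw [h3] at h2
  linarith

lemma sum_pow_le (p n : ℕ) :
    ((p : ℝ) + 1) * ∑ m ∈ Finset.range n, (m : ℝ) ^ p ≤ (n : ℝ) ^ (p + 1) := by
  induction n with
  | zero => simp
  | succ n ih =>
    rw [Finset.sum_range_succ, mul_add]
    push_cast
    have := bern_upper p (x := (n : ℝ)) (Nat.cast_nonneg n)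
    push_cast at this
    linarith

lemma le_sum_pow (p n : ℕ) :
    (n : ℝ) ^ (p + 1) ≤ ((p : ℝ) + 1) * ∑ m ∈ Finset.range (n + 1), (m : ℝ) ^ p := by
  induction n with
  | zero =>
    simp [pow_succ]
    positivity
  | succ n ih =>
    rw [Finset.sum_range_succ, mul_add]
    have hb := bern_lower p (x := ((n : ℝ) + 1))
      (by have : (0:ℝ) ≤ n := Nat.cast_nonneg n; linarith)
    push_cast
    push_cast at hb
    have : (n : ℝ) + 1 - 1 = (n : ℝ) := by ring
    rw [this] at hb
    linarith

lemma tendsto_nsub_div : Tendsto (fun n : ℕ => ((n : ℝ) - 1) / n) atTop (𝓝 1) := by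
  have h := tendsto_const_nhds (x := (1:ℝ)) (f := atTop (α := ℕ)) |>.sub
    tendsto_one_div_atTop_nhds_zero_nat
  rw [sub_zero] at h
  apply h.congr'
  filter_upwards [Filter.eventually_ge_atTop 1] with n hn
  have hn' : (0 : ℝ) < n := by exact_mod_cast hn
  field_simp

lemma tendsto_sum_pow (p : ℕ) :
    Tendsto (fun n : ℕ => (∑ m ∈ Finset.range n, (m : ℝ) ^ p) / (n : ℝ) ^ (p + 1))
      atTop (𝓝 (1 / ((p : ℝ) + 1))) := by
  have hp : (0 : ℝ) < (p : ℝ) + 1 := by positivity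
  have hg : Tendsto (fun n : ℕ => (((n : ℝ) - 1) / n) ^ (p + 1) * (1 / ((p : ℝ) + 1)))
      atTop (𝓝 (1 / ((p : ℝ) + 1))) := by
    have := (tendsto_nsub_div.pow (p + 1)).mul_const (1 / ((p : ℝ) + 1))
    simpa using this
  refine tendsto_of_tendsto_of_tendsto_of_le_of_le' hg tendsto_const_nhds ?_ ?_
  · filter_upwards [Filter.eventually_ge_atTop 1] with n hn
    have hn' : (0 : ℝ) < n := by exact_mod_cast hn
    have key : ((n : ℝ) - 1) ^ (p + 1) ≤ ((p : ℝ) + 1) * ∑ m ∈ Finset.range n, (m : ℝ) ^ p := by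
      have := le_sum_pow p (n - 1)
      rw [Nat.sub_add_cancel hn] at this
      rwa [Nat.cast_sub hn, Nat.cast_one] at this
    rw [div_pow, div_mul_eq_mul_div, mul_one_div, div_div,
      div_le_div_iff₀ (by positivity) (by positivity)]
    nlinarith [mul_le_mul_of_nonneg_right key (le_of_lt (pow_pos hn' (p + 1)))]
  · filter_upwards [Filter.eventually_ge_atTop 1] with n hn
    have hn' : (0 : ℝ) < n := by exact_mod_cast hn
    rw [div_le_div_iff₀ (by positivity) hp]
    have := sum_pow_le p n
    nlinarith

lemma abel_id (ξ : ℕ → ℝ) (p : ℕ) : ∀ n : ℕ,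
    ∑ m ∈ Finset.range (n + 1), ξ m * (m : ℝ) ^ p
      = (∑ k ∈ Finset.range (n + 1), ξ k) * (n : ℝ) ^ p
        - ∑ i ∈ Finset.range n,
            (∑ k ∈ Finset.range (i + 1), ξ k) * (((i : ℝ) + 1) ^ p - (i : ℝ) ^ p) := by
  intro n
  induction n with
  | zero => simp
  | succ n ih =>
    rw [Finset.sum_range_succ (f := fun m => ξ m * (m : ℝ) ^ p), ih,
      Finset.sum_range_succ
        (f := fun i => (∑ k ∈ Finset.range (i + 1), ξ k) * (((i : ℝ) + 1) ^ p - (i : ℝ) ^ p)),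
      Finset.sum_range_succ (f := fun k => ξ k) (n := n + 1)]
    push_cast
    ring

lemma abel_id2 (p : ℕ) : ∀ n : ℕ,
    ∑ i ∈ Finset.range n, ((i : ℝ) + 1) * (((i : ℝ) + 1) ^ p - (i : ℝ) ^ p)
      = (n : ℝ) ^ (p + 1) - ∑ i ∈ Finset.range n, (i : ℝ) ^ p := by
  intro n
  induction n with
  | zero => simp
  | succ n ih =>
    rw [Finset.sum_range_succ, ih, Finset.sum_range_succ]
    push_cast
    ring

lemma shift_cesaro {ξ : ℕ → ℝ} {Q : ℝ}
    (hQ : Tendsto (fun n : ℕ => (∑ k ∈ Finset.range (n + 1), ξ k) / n) atTop (𝓝 Q)) :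
    Tendsto (fun n : ℕ => (∑ k ∈ Finset.range n, ξ k) / n) atTop (𝓝 Q) := by
  rw [← tendsto_add_atTop_iff_nat 1]
  have h1 := hQ.mul (tendsto_natCast_div_add_atTop (1 : ℝ))
  rw [mul_one] at h1
  apply h1.congr'
  filter_upwards [Filter.eventually_ge_atTop 1] with n hn
  have hn' : (0 : ℝ) < n := by exact_mod_cast hn
  push_cast
  field_simp

lemma weighted_null {ξ : ℕ → ℝ} {C : ℝ}
    (hC : ∀ n : ℕ, ∑ m ∈ Finset.range n, |ξ m| ≤ C * n)
    {ε : ℕ → ℝ} (hε0 : ∀ m, 0 ≤ ε m) (hε : Tendsto ε atTop (𝓝 0)) :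
    Tendsto (fun n : ℕ => (∑ m ∈ Finset.range n, |ξ m| * ε m) / n) atTop (𝓝 0) := by
  have hC0 : 0 ≤ C := by
    have h := hC 1
    simp only [Finset.sum_range_one, Nat.cast_one, mul_one] at h
    exact le_trans (abs_nonneg _) h
  rw [Metric.tendsto_atTop]
  intro δ hδ
  have hCp : (0 : ℝ) < 2 * (C + 1) := by linarith
  set δ' := δ / (2 * (C + 1)) with hδ'def
  have hδ'pos : 0 < δ' := div_pos hδ hCp
  obtain ⟨M, hM⟩ := Metric.tendsto_atTop.1 hε δ' hδ'pos
  set K := ∑ m ∈ Finset.range M, |ξ m| * ε m with hKdef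
  have hK0 : 0 ≤ K := Finset.sum_nonneg fun m _ => mul_nonneg (abs_nonneg _) (hε0 m)
  obtain ⟨N, hN⟩ := exists_nat_gt (K / (δ / 2))
  refine ⟨max M (N + 1), fun n hn => ?_⟩
  have hnM : M ≤ n := le_trans (le_max_left _ _) hn
  have hnN : (N : ℝ) + 1 ≤ n := by exact_mod_cast le_trans (le_max_right _ _) hn
  have hn1 : 1 ≤ n := le_trans (Nat.le_add_left 1 N) (le_trans (le_max_right _ _) hn)
  have hnR : (0 : ℝ) < n := by exact_mod_cast hn1
  have hsplit : ∑ m ∈ Finset.range n, |ξ m| * ε m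
      = K + ∑ m ∈ Finset.Ico M n, |ξ m| * ε m := by
    rw [hKdef, Finset.range_eq_Ico, Finset.range_eq_Ico]
    exact (Finset.sum_Ico_consecutive (fun m => |ξ m| * ε m) (Nat.zero_le M) hnM).symm
  have htail : ∑ m ∈ Finset.Ico M n, |ξ m| * ε m ≤ δ' * (C * n) := by
    have h1 : ∑ m ∈ Finset.Ico M n, |ξ m| * ε m ≤ ∑ m ∈ Finset.Ico M n, |ξ m| * δ' := by
      refine Finset.sum_le_sum fun m hm => ?_
      refine mul_le_mul_of_nonneg_left ?_ (abs_nonneg _)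
      have := hM m (Finset.mem_Ico.1 hm).1
      rw [Real.dist_eq, sub_zero, abs_of_nonneg (hε0 m)] at this
      exact this.le
    have h2 : ∑ m ∈ Finset.Ico M n, |ξ m| ≤ C * n := by
      refine le_trans (Finset.sum_le_sum_of_subset_of_nonneg ?_ fun m _ _ => abs_nonneg _) (hC n)
      rw [Finset.range_eq_Ico]
      exact Finset.Ico_subset_Ico (Nat.zero_le M) le_rfl
    calc ∑ m ∈ Finset.Ico M n, |ξ m| * ε m ≤ ∑ m ∈ Finset.Ico M n, |ξ m| * δ' := h1
      _ = (∑ m ∈ Finset.Ico M n, |ξ m|) * δ' := by rw [Finset.sum_mul]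
      _ ≤ (C * n) * δ' := mul_le_mul_of_nonneg_right h2 hδ'pos.le
      _ = δ' * (C * n) := mul_comm _ _
  have hsum0 : 0 ≤ ∑ m ∈ Finset.range n, |ξ m| * ε m :=
    Finset.sum_nonneg fun m _ => mul_nonneg (abs_nonneg _) (hε0 m)
  rw [Real.dist_eq, sub_zero, abs_of_nonneg (by positivity)]
  have hKn : K / n < δ / 2 := by
    rw [div_lt_iff₀ hnR]
    have : K / (δ / 2) < (n : ℝ) := lt_of_lt_of_le hN (by linarith)
    rw [div_lt_iff₀ (by linarith)] at this
    linarith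
  have hδ'C : δ' * C ≤ δ / 2 := by
    rw [hδ'def, div_mul_eq_mul_div, div_le_div_iff₀ hCp two_pos]
    nlinarith
  have heq : (K + δ' * (C * ↑n)) / ↑n = K / ↑n + δ' * C := by
    field_simp
  calc (∑ m ∈ Finset.range n, |ξ m| * ε m) / n
      = (K + ∑ m ∈ Finset.Ico M n, |ξ m| * ε m) / ↑n := by rw [hsplit]
    _ ≤ (K + δ' * (C * ↑n)) / ↑n := by
        gcongr
    _ = K / ↑n + δ' * C := heq
    _ < δ / 2 + δ / 2 := by
        have := add_lt_add_of_lt_of_le hKn hδ'C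
        linarith
    _ = δ := by ring

lemma key_weighted {ξ : ℕ → ℝ} {Q : ℝ}
    (hS : Tendsto (fun n : ℕ => (∑ k ∈ Finset.range n, ξ k) / n) atTop (𝓝 Q)) (p : ℕ) :
    Tendsto (fun n : ℕ => (∑ m ∈ Finset.range n, ξ m * (m : ℝ) ^ p) / (n : ℝ) ^ (p + 1))
      atTop (𝓝 (Q / ((p : ℝ) + 1))) := by
  set S : ℕ → ℝ := fun n => ∑ k ∈ Finset.range n, ξ k with hSdef
  set η : ℕ → ℝ := fun n => S n / n - Q with hηdef
  have hη : Tendsto η atTop (𝓝 0) := by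
    have := hS.sub (tendsto_const_nhds (x := Q))
    simpa using this
  have hηabs : Tendsto (fun n => |η n|) atTop (𝓝 0) := by
    have := hη.abs
    simpa using this
  have hces : Tendsto (fun n : ℕ => (↑n)⁻¹ * ∑ m ∈ Finset.range n, |η m|) atTop (𝓝 0) :=
    hηabs.cesaro
  have hs : ∀ i : ℕ, (∑ k ∈ Finset.range (i + 1), ξ k)
      = Q * ((i : ℝ) + 1) + ((i : ℝ) + 1) * η (i + 1) := by
    intro i
    show S (i + 1) = _
    have hi : ((i : ℝ) + 1) ≠ 0 := by positivity
    have : η (i + 1) = S (i + 1) / ((i : ℝ) + 1) - Q := by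
      rw [hηdef]; push_cast; ring_nf
    rw [this]
    field_simp
    ring
  -- numerator decomposition
  have hnum : ∀ n : ℕ, ∑ m ∈ Finset.range (n + 1), ξ m * (m : ℝ) ^ p
      = Q * (∑ i ∈ Finset.range (n + 1), (i : ℝ) ^ p)
        + ((((n : ℝ) + 1) * η (n + 1) * (n : ℝ) ^ p)
          - ∑ i ∈ Finset.range n, ((i : ℝ) + 1) * η (i + 1) * (((i : ℝ) + 1) ^ p - (i : ℝ) ^ p)) := by
    intro n
    have e1 : ∑ i ∈ Finset.range n, (∑ k ∈ Finset.range (i + 1), ξ k) * (((i : ℝ) + 1) ^ p - (i : ℝ) ^ p)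
        = Q * (∑ i ∈ Finset.range n, ((i : ℝ) + 1) * (((i : ℝ) + 1) ^ p - (i : ℝ) ^ p))
          + ∑ i ∈ Finset.range n, ((i : ℝ) + 1) * η (i + 1) * (((i : ℝ) + 1) ^ p - (i : ℝ) ^ p) := by
      rw [Finset.mul_sum, ← Finset.sum_add_distrib]
      refine Finset.sum_congr rfl fun i _ => ?_
      rw [hs i]
      ring
    have h1 := abel_id ξ p n
    have h2 := abel_id2 p n
    have h3 := hs n
    rw [h1, e1, h3, h2, Finset.sum_range_succ (f := fun i => (i : ℝ) ^ p)]
    ring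
  rw [← tendsto_add_atTop_iff_nat 1]
  have hmain : Tendsto (fun n : ℕ =>
      Q * ((∑ i ∈ Finset.range (n + 1), (i : ℝ) ^ p) / ((n : ℝ) + 1) ^ (p + 1)))
      atTop (𝓝 (Q / ((p : ℝ) + 1))) := by
    have h := ((tendsto_sum_pow p).comp (tendsto_add_atTop_nat 1)).const_mul Q
    rw [mul_one_div] at h
    apply h.congr
    intro n
    simp only [Function.comp_apply]
    push_cast
    ring
  have herr : Tendsto (fun n : ℕ =>
      ((((n : ℝ) + 1) * η (n + 1) * (n : ℝ) ^ p)
        - ∑ i ∈ Finset.range n, ((i : ℝ) + 1) * η (i + 1) * (((i : ℝ) + 1) ^ p - (i : ℝ) ^ p))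
        / ((n : ℝ) + 1) ^ (p + 1)) atTop (𝓝 0) := by
    apply squeeze_zero_norm (a := fun n : ℕ =>
      |η (n + 1)| + (p : ℝ) * ((↑(n + 1) : ℝ)⁻¹ * ∑ m ∈ Finset.range (n + 1), |η m|))
    · intro n
      have hn1 : (0 : ℝ) < (n : ℝ) + 1 := by positivity
      have hdpos : (0 : ℝ) < ((n : ℝ) + 1) ^ (p + 1) := by positivity
      rw [Real.norm_eq_abs, abs_div, abs_of_pos hdpos, div_le_iff₀ hdpos]
      have hX : |(((n : ℝ) + 1) * η (n + 1) * (n : ℝ) ^ p)| ≤ |η (n + 1)| * ((n : ℝ) + 1) ^ (p + 1) := by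
        rw [abs_mul, abs_mul, abs_of_pos hn1, abs_pow, Nat.abs_cast]
        calc ((n : ℝ) + 1) * |η (n + 1)| * (n : ℝ) ^ p
            ≤ ((n : ℝ) + 1) * |η (n + 1)| * ((n : ℝ) + 1) ^ p := by
              gcongr <;> linarith [Nat.cast_nonneg (α := ℝ) n]
          _ = |η (n + 1)| * ((n : ℝ) + 1) ^ (p + 1) := by rw [pow_succ]; ring
      have hterm : ∀ i : ℕ, i < n →
          |((i : ℝ) + 1) * η (i + 1) * (((i : ℝ) + 1) ^ p - (i : ℝ) ^ p)|
            ≤ (p : ℝ) * ((n : ℝ) + 1) ^ p * |η (i + 1)| := by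
        intro i hi
        have hi1 : (0 : ℝ) < (i : ℝ) + 1 := by positivity
        have hdiff : (0 : ℝ) ≤ ((i : ℝ) + 1) ^ p - (i : ℝ) ^ p :=
          sub_nonneg.2 (pow_le_pow_left₀ (Nat.cast_nonneg i) (by linarith) p)
        have hin : (i : ℝ) + 1 ≤ (n : ℝ) + 1 := by
          have : (i : ℝ) ≤ n := by exact_mod_cast hi.le
          linarith
        rw [abs_mul, abs_mul, abs_of_pos hi1, abs_of_nonneg hdiff]
        have hb : ((i : ℝ) + 1) * (((i : ℝ) + 1) ^ p - (i : ℝ) ^ p) ≤ (p : ℝ) * ((n : ℝ) + 1) ^ p := by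
          cases p with
          | zero => simp
          | succ q =>
            have hbl := bern_lower q (x := (i : ℝ) + 1) (by linarith [Nat.cast_nonneg (α := ℝ) i])
            have hsimp : ((i : ℝ) + 1 - 1) = (i : ℝ) := by ring
            rw [hsimp] at hbl
            have hple : ((i : ℝ) + 1) ^ (q + 1) ≤ ((n : ℝ) + 1) ^ (q + 1) :=
              pow_le_pow_left₀ hi1.le hin _
            have h4 : ((i : ℝ) + 1) * (((i : ℝ) + 1) ^ (q + 1) - (i : ℝ) ^ (q + 1))
                ≤ ((q : ℝ) + 1) * ((i : ℝ) + 1) ^ (q + 1) := by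
              have h5 := mul_le_mul_of_nonneg_left hbl hi1.le
              calc ((i : ℝ) + 1) * (((i : ℝ) + 1) ^ (q + 1) - (i : ℝ) ^ (q + 1))
                  ≤ ((i : ℝ) + 1) * (((q : ℝ) + 1) * ((i : ℝ) + 1) ^ q) := h5
                _ = ((q : ℝ) + 1) * ((i : ℝ) + 1) ^ (q + 1) := by rw [pow_succ]; ring
            have h6 : ((q : ℝ) + 1) * ((i : ℝ) + 1) ^ (q + 1)
                ≤ ((q : ℝ) + 1) * ((n : ℝ) + 1) ^ (q + 1) := by
              apply mul_le_mul_of_nonneg_left hple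
              positivity
            push_cast
            linarith
        calc ((i : ℝ) + 1) * |η (i + 1)| * (((i : ℝ) + 1) ^ p - (i : ℝ) ^ p)
            = (((i : ℝ) + 1) * (((i : ℝ) + 1) ^ p - (i : ℝ) ^ p)) * |η (i + 1)| := by ring
          _ ≤ ((p : ℝ) * ((n : ℝ) + 1) ^ p) * |η (i + 1)| :=
              mul_le_mul_of_nonneg_right hb (abs_nonneg _)
      have hY : |∑ i ∈ Finset.range n, ((i : ℝ) + 1) * η (i + 1) * (((i : ℝ) + 1) ^ p - (i : ℝ) ^ p)|
          ≤ (p : ℝ) * ((n : ℝ) + 1) ^ p * ∑ m ∈ Finset.range (n + 1), |η m| := by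
        calc |∑ i ∈ Finset.range n, ((i : ℝ) + 1) * η (i + 1) * (((i : ℝ) + 1) ^ p - (i : ℝ) ^ p)|
            ≤ ∑ i ∈ Finset.range n, |((i : ℝ) + 1) * η (i + 1) * (((i : ℝ) + 1) ^ p - (i : ℝ) ^ p)| :=
              Finset.abs_sum_le_sum_abs _ _
          _ ≤ ∑ i ∈ Finset.range n, (p : ℝ) * ((n : ℝ) + 1) ^ p * |η (i + 1)| :=
              Finset.sum_le_sum fun i hi => hterm i (Finset.mem_range.1 hi)
          _ = (p : ℝ) * ((n : ℝ) + 1) ^ p * ∑ i ∈ Finset.range n, |η (i + 1)| := by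
              rw [← Finset.mul_sum]
          _ ≤ (p : ℝ) * ((n : ℝ) + 1) ^ p * ∑ m ∈ Finset.range (n + 1), |η m| := by
              have hsub : ∑ i ∈ Finset.range n, |η (i + 1)|
                  ≤ ∑ m ∈ Finset.range (n + 1), |η m| := by
                rw [Finset.sum_range_succ' (fun m => |η m|) n]
                have : (0:ℝ) ≤ |η 0| := abs_nonneg _
                linarith
              apply mul_le_mul_of_nonneg_left hsub
              positivity
      calc |(((n : ℝ) + 1) * η (n + 1) * (n : ℝ) ^ p)
            - ∑ i ∈ Finset.range n, ((i : ℝ) + 1) * η (i + 1) * (((i : ℝ) + 1) ^ p - (i : ℝ) ^ p)|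
          ≤ |(((n : ℝ) + 1) * η (n + 1) * (n : ℝ) ^ p)|
            + |∑ i ∈ Finset.range n, ((i : ℝ) + 1) * η (i + 1) * (((i : ℝ) + 1) ^ p - (i : ℝ) ^ p)| :=
            abs_sub _ _
        _ ≤ |η (n + 1)| * ((n : ℝ) + 1) ^ (p + 1)
            + (p : ℝ) * ((n : ℝ) + 1) ^ p * ∑ m ∈ Finset.range (n + 1), |η m| := add_le_add hX hY
        _ ≤ (|η (n + 1)| + (p : ℝ) * ((↑(n + 1) : ℝ)⁻¹ * ∑ m ∈ Finset.range (n + 1), |η m|))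
            * ((n : ℝ) + 1) ^ (p + 1) := by
            push_cast
            rw [add_mul]
            apply add_le_add le_rfl
            have hsumnn : (0 : ℝ) ≤ ∑ m ∈ Finset.range (n + 1), |η m| :=
              Finset.sum_nonneg fun m _ => abs_nonneg _
            apply le_of_eq
            rw [pow_succ]
            field_simp
    · have h1 := hηabs.comp (tendsto_add_atTop_nat 1)
      have h2 := (hces.comp (tendsto_add_atTop_nat 1)).const_mul (p : ℝ)
      have := h1.add h2
      simpa using this
  have hcomb := hmain.add herr
  rw [add_zero] at hcomb
  apply hcomb.congr
  intro n
  push_cast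
  rw [hnum n]
  ring

lemma main_tendsto {ξ : ℕ → ℝ} {C Q : ℝ}
    (hC : ∀ n : ℕ, ∑ m ∈ Finset.range n, |ξ m| ≤ C * n)
    (hS : Tendsto (fun n : ℕ => (∑ k ∈ Finset.range n, ξ k) / n) atTop (𝓝 Q)) :
    ∀ ν : ℕ, Tendsto (fun n : ℕ => esum ξ ν n / (n : ℝ) ^ ν) atTop
      (𝓝 (Q ^ ν / (Nat.factorial ν : ℝ))) := by
  intro ν
  induction ν with
  | zero => simpa [esum_zero] using tendsto_const_nhds (α := ℕ) (x := (1:ℝ))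
  | succ ν ih =>
    set L : ℝ := Q ^ ν / (Nat.factorial ν : ℝ) with hL
    set d : ℕ → ℝ := fun m => if m = 0 then 0 else |esum ξ ν m / (m : ℝ) ^ ν - L| with hd
    have hd0 : ∀ m, 0 ≤ d m := by
      intro m
      rw [hd]
      dsimp only
      split
      · exact le_refl 0
      · exact abs_nonneg _
    have hdt : Tendsto d atTop (𝓝 0) := by
      have h0 : Tendsto (fun m : ℕ => |esum ξ ν m / (m : ℝ) ^ ν - L|) atTop (𝓝 0) := by
        have := (ih.sub (tendsto_const_nhds (x := L))).abs
        simpa using this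
      apply h0.congr'
      filter_upwards [Filter.eventually_ge_atTop 1] with m hm
      rw [hd]
      dsimp only
      rw [if_neg (by omega)]
    have hpoint : ∀ m : ℕ, |esum ξ ν m - L * (m : ℝ) ^ ν| ≤ (m : ℝ) ^ ν * d m := by
      intro m
      cases m with
      | zero =>
        cases ν with
        | zero =>
          simp [esum_zero, hd, hL, Nat.factorial]
        | succ ν' =>
          rw [esum_succ_eq_sum]
          simp [hd]
      | succ k =>
        have hk : ((k : ℝ) + 1) ≠ 0 := by positivity
        have hkpow : (0 : ℝ) < ((k : ℝ) + 1) ^ ν := by positivity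
        have heq : esum ξ ν (k + 1) - L * ((k + 1 : ℕ) : ℝ) ^ ν
            = ((k + 1 : ℕ) : ℝ) ^ ν * (esum ξ ν (k + 1) / ((k + 1 : ℕ) : ℝ) ^ ν - L) := by
          push_cast
          field_simp
        rw [heq, abs_mul]
        rw [hd]
        dsimp only
        rw [if_neg (by omega)]
        push_cast
        rw [abs_of_pos hkpow]
    have hdec : ∀ n : ℕ, esum ξ (ν + 1) n / (n : ℝ) ^ (ν + 1)
        = L * ((∑ m ∈ Finset.range n, ξ m * (m : ℝ) ^ ν) / (n : ℝ) ^ (ν + 1))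
          + (∑ m ∈ Finset.range n, ξ m * (esum ξ ν m - L * (m : ℝ) ^ ν)) / (n : ℝ) ^ (ν + 1) := by
      intro n
      rw [esum_succ_eq_sum]
      have hnum : ∑ m ∈ Finset.range n, ξ m * esum ξ ν m
          = L * (∑ m ∈ Finset.range n, ξ m * (m : ℝ) ^ ν)
            + ∑ m ∈ Finset.range n, ξ m * (esum ξ ν m - L * (m : ℝ) ^ ν) := by
        rw [Finset.mul_sum, ← Finset.sum_add_distrib]
        exact Finset.sum_congr rfl fun m _ => by ring
      rw [hnum, add_div, mul_div_assoc]
    have hmainT : Tendsto (fun n : ℕ =>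
        L * ((∑ m ∈ Finset.range n, ξ m * (m : ℝ) ^ ν) / (n : ℝ) ^ (ν + 1)))
        atTop (𝓝 (L * (Q / ((ν : ℝ) + 1)))) := (key_weighted hS ν).const_mul L
    have herrT : Tendsto (fun n : ℕ =>
        (∑ m ∈ Finset.range n, ξ m * (esum ξ ν m - L * (m : ℝ) ^ ν)) / (n : ℝ) ^ (ν + 1))
        atTop (𝓝 0) := by
      apply squeeze_zero_norm (a := fun n : ℕ => (∑ m ∈ Finset.range n, |ξ m| * d m) / n)
        ?_ (weighted_null hC hd0 hdt)
      intro n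
      cases n with
      | zero => simp
      | succ k =>
        have hn : (0 : ℝ) < ((k + 1 : ℕ) : ℝ) := by positivity
        have hnp : (0 : ℝ) < ((k + 1 : ℕ) : ℝ) ^ (ν + 1) := by positivity
        have hnν : (0 : ℝ) < ((k + 1 : ℕ) : ℝ) ^ ν := by positivity
        have hsum0 : (0 : ℝ) ≤ ∑ m ∈ Finset.range (k + 1), |ξ m| * d m :=
          Finset.sum_nonneg fun m _ => mul_nonneg (abs_nonneg _) (hd0 m)
        have h1 : |∑ m ∈ Finset.range (k + 1), ξ m * (esum ξ ν m - L * (m : ℝ) ^ ν)|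
            ≤ ((k + 1 : ℕ) : ℝ) ^ ν * ∑ m ∈ Finset.range (k + 1), |ξ m| * d m := by
          calc |∑ m ∈ Finset.range (k + 1), ξ m * (esum ξ ν m - L * (m : ℝ) ^ ν)|
              ≤ ∑ m ∈ Finset.range (k + 1), |ξ m * (esum ξ ν m - L * (m : ℝ) ^ ν)| :=
                Finset.abs_sum_le_sum_abs _ _
            _ ≤ ∑ m ∈ Finset.range (k + 1), |ξ m| * (((k + 1 : ℕ) : ℝ) ^ ν * d m) := by
                refine Finset.sum_le_sum fun m hm => ?_
                rw [abs_mul]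
                refine mul_le_mul_of_nonneg_left ?_ (abs_nonneg _)
                refine le_trans (hpoint m) ?_
                have hmle : ((m : ℝ)) ≤ ((k + 1 : ℕ) : ℝ) := by
                  exact_mod_cast (Finset.mem_range.1 hm).le
                exact mul_le_mul_of_nonneg_right
                  (pow_le_pow_left₀ (Nat.cast_nonneg m) hmle ν) (hd0 m)
            _ = ((k + 1 : ℕ) : ℝ) ^ ν * ∑ m ∈ Finset.range (k + 1), |ξ m| * d m := by
                rw [Finset.mul_sum]
                exact Finset.sum_congr rfl fun m _ => by ring
        rw [Real.norm_eq_abs, abs_div, abs_of_pos hnp, pow_succ,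
          div_le_div_iff₀ (by positivity) hn]
        calc |∑ m ∈ Finset.range (k + 1), ξ m * (esum ξ ν m - L * (m : ℝ) ^ ν)| * ((k + 1 : ℕ) : ℝ)
            ≤ (((k + 1 : ℕ) : ℝ) ^ ν * ∑ m ∈ Finset.range (k + 1), |ξ m| * d m) * ((k + 1 : ℕ) : ℝ) :=
              mul_le_mul_of_nonneg_right h1 hn.le
          _ = (∑ m ∈ Finset.range (k + 1), |ξ m| * d m) * (((k + 1 : ℕ) : ℝ) ^ ν * ((k + 1 : ℕ) : ℝ)) := by
              ring
    have hlim : L * (Q / ((ν : ℝ) + 1)) = Q ^ (ν + 1) / (Nat.factorial (ν + 1) : ℝ) := by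
      rw [hL, Nat.factorial_succ]
      have hf : ((Nat.factorial ν : ℕ) : ℝ) ≠ 0 := by
        exact_mod_cast Nat.factorial_ne_zero ν
      push_cast
      field_simp
      ring
    have hcomb := hmainT.add herrT
    rw [add_zero, hlim] at hcomb
    apply hcomb.congr
    intro n
    rw [hdec n]

theorem iterated_ergodic_scalar (ξ : ℕ → ℝ) (R Q : ℝ)
    (hR : Filter.limsup (fun n : ℕ => (∑ k ∈ Finset.range (n + 1), |ξ k|) / n) atTop = R)
    (hbdd : Filter.IsBoundedUnder (· ≤ ·) atTop
      (fun n : ℕ => (∑ k ∈ Finset.range (n + 1), |ξ k|) / n))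
    (hQ : Tendsto (fun n : ℕ => (∑ k ∈ Finset.range (n + 1), ξ k) / n) atTop (nhds Q)) :
    ∀ ν : ℕ, 1 ≤ ν →
      Tendsto (fun n : ℕ => iterSum ξ ν n / (n : ℝ) ^ ν) atTop
        (nhds (Q ^ ν / (Nat.factorial ν : ℝ))) := by
  intro ν hν
  have hS : Tendsto (fun n : ℕ => (∑ k ∈ Finset.range n, ξ k) / n) atTop (𝓝 Q) :=
    shift_cesaro hQ
  obtain ⟨C, hC⟩ : ∃ C : ℝ, ∀ n : ℕ, ∑ m ∈ Finset.range n, |ξ m| ≤ C * n := by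
    obtain ⟨b, hb⟩ := hbdd
    rw [Filter.eventually_map] at hb
    obtain ⟨N, hN⟩ := Filter.eventually_atTop.1 hb
    refine ⟨max (max b 0) (∑ m ∈ Finset.range (N + 1), |ξ m|), fun n => ?_⟩
    set C := max (max b 0) (∑ m ∈ Finset.range (N + 1), |ξ m|) with hCdef
    have hC0 : (0 : ℝ) ≤ C := le_trans (le_max_right b 0) (le_max_left _ _)
    cases n with
    | zero => simp
    | succ k =>
      by_cases hkN : k ≤ N
      · have hsub : Finset.range (k + 1) ⊆ Finset.range (N + 1) :=
          Finset.range_subset_range.2 (by omega)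
        have h1 : ∑ m ∈ Finset.range (k + 1), |ξ m| ≤ ∑ m ∈ Finset.range (N + 1), |ξ m| :=
          Finset.sum_le_sum_of_subset_of_nonneg hsub fun m _ _ => abs_nonneg _
        have h2 : (∑ m ∈ Finset.range (N + 1), |ξ m|) ≤ C := le_max_right _ _
        have h3 : (1 : ℝ) ≤ ((k + 1 : ℕ) : ℝ) := by exact_mod_cast Nat.succ_le_succ (Nat.zero_le k)
        calc ∑ m ∈ Finset.range (k + 1), |ξ m| ≤ C := le_trans h1 h2
          _ = C * 1 := (mul_one C).symm
          _ ≤ C * ((k + 1 : ℕ) : ℝ) := mul_le_mul_of_nonneg_left h3 hC0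
      · have hk1 : N ≤ k := by omega
        have hkpos : (0 : ℝ) < (k : ℝ) := by
          have : 1 ≤ k := by omega
          exact_mod_cast this
        have hk : (∑ m ∈ Finset.range (k + 1), |ξ m|) / (k : ℝ) ≤ b := hN k hk1
        rw [div_le_iff₀ hkpos] at hk
        have h1 : b ≤ C := le_trans (le_max_left b 0) (le_max_left _ _)
        have h2 : b * (k : ℝ) ≤ C * (k : ℝ) := mul_le_mul_of_nonneg_right h1 hkpos.le
        have h3 : C * (k : ℝ) ≤ C * ((k + 1 : ℕ) : ℝ) := by
          apply mul_le_mul_of_nonneg_left ?_ hC0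
          push_cast
          linarith
        exact le_trans hk (le_trans h2 h3)
  have h := main_tendsto hC hS ν
  apply h.congr
  intro n
  rw [iterSum_eq_esum]
end

section
/- Let ξ : ℕ → ℝ^d be a sequence of d-dimensional vectors such that limsup_{n→∞} n^{-1} ∑_{k=0}^n |ξ(k)| < ∞ and lim_{n→∞} n^{-1} ∑_{k=0}^n ξ(k) = Q = (Q_1,...,Q_d) exists with |Q| < ∞. Then for any indices 1 ≤ i_1,...,i_ν ≤ d, lim_{n→∞} n^{-ν} ∑_{0 ≤ k_1 < ... < k_ν < n} ξ_{i_1}(k_1) ξ_{i_2}(k_2) ⋯ ξ_{i_ν}(k_ν) = (1/ν!) ∏_{j=1}^ν Q_{i_j}. -/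
open Filter Finset

/-- The iterated sum `Σ^{i_1,...,i_ν}(n) = ∑_{0 ≤ k_1 < ... < k_ν < n} ξ_{i_1}(k_1) ⋯ ξ_{i_ν}(k_ν)`. -/
noncomputable def iterSumVec {d : ℕ} (ξ : ℕ → EuclideanSpace ℝ (Fin d)) {ν : ℕ}
    (i : Fin ν → Fin d) (n : ℕ) : ℝ :=
  ∑ k ∈ Finset.univ.filter (fun k : Fin ν → Fin n => ∀ p q : Fin ν, p < q → k p < k q),
    ∏ j : Fin ν, ξ (k j) (i j)

lemma pow_succ_sub_bounds (ν : ℕ) (t : ℕ) :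
    ((ν:ℝ)+1) * (t:ℝ)^ν ≤ ((t:ℝ)+1)^(ν+1) - (t:ℝ)^(ν+1) ∧
      ((t:ℝ)+1)^(ν+1) - (t:ℝ)^(ν+1) ≤ ((ν:ℝ)+1) * ((t:ℝ)+1)^ν := by
  have hid := geom_sum₂_mul ((t:ℝ)+1) (t:ℝ) (ν+1)
  simp only [add_sub_cancel_left, mul_one] at hid
  rw [← hid]
  have ht : (0:ℝ) ≤ t := Nat.cast_nonneg t
  constructor
  · calc ((ν:ℝ)+1) * (t:ℝ)^ν = ∑ _i ∈ range (ν+1), (t:ℝ)^ν := by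
          rw [Finset.sum_const, card_range, nsmul_eq_mul]; push_cast; ring
      _ ≤ ∑ i ∈ range (ν+1), ((t:ℝ)+1)^i * (t:ℝ)^(ν+1-1-i) := by
          apply Finset.sum_le_sum
          intro i hi
          rw [Finset.mem_range] at hi
          have hiν : i ≤ ν := Nat.lt_succ_iff.mp hi
          calc (t:ℝ)^ν = (t:ℝ)^i * (t:ℝ)^(ν+1-1-i) := by
                rw [← pow_add]; congr 1; omega
            _ ≤ ((t:ℝ)+1)^i * (t:ℝ)^(ν+1-1-i) := by
                apply mul_le_mul_of_nonneg_right _ (pow_nonneg ht _)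
                exact pow_le_pow_left₀ ht (by linarith) i
  · calc (∑ i ∈ range (ν+1), ((t:ℝ)+1)^i * (t:ℝ)^(ν+1-1-i))
        ≤ ∑ i ∈ range (ν+1), ((t:ℝ)+1)^ν := by
          apply Finset.sum_le_sum
          intro i hi
          rw [Finset.mem_range] at hi
          have hiν : i ≤ ν := Nat.lt_succ_iff.mp hi
          calc ((t:ℝ)+1)^i * (t:ℝ)^(ν+1-1-i) ≤ ((t:ℝ)+1)^i * ((t:ℝ)+1)^(ν+1-1-i) := by
                apply mul_le_mul_of_nonneg_left _ (pow_nonneg (by linarith) _)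
                exact pow_le_pow_left₀ ht (by linarith) _
            _ = ((t:ℝ)+1)^ν := by rw [← pow_add]; congr 1; omega
      _ = ((ν:ℝ)+1) * ((t:ℝ)+1)^ν := by
          rw [Finset.sum_const, card_range, nsmul_eq_mul]; push_cast; ring

lemma sum_pow_asymp (ν : ℕ) :
    Tendsto (fun n : ℕ => (∑ t ∈ Finset.range n, (t : ℝ) ^ ν) / (n : ℝ) ^ (ν + 1)) atTop
      (nhds (1 / ((ν:ℝ) + 1))) := by
  have hν : (0:ℝ) < (ν:ℝ) + 1 := by positivity
  have htel : ∀ n : ℕ, ∑ t ∈ range n, (((t:ℝ)+1)^(ν+1) - (t:ℝ)^(ν+1)) = (n:ℝ)^(ν+1) := by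
    intro n
    have := Finset.sum_range_sub (fun t : ℕ => (t:ℝ)^(ν+1)) n
    simp only [Nat.cast_zero] at this
    rw [zero_pow (Nat.succ_ne_zero ν), sub_zero] at this
    rw [← this]
    apply Finset.sum_congr rfl
    intro t _
    push_cast
    ring_nf
  have hlow : ∀ n : ℕ, ((ν:ℝ)+1) * ∑ t ∈ range n, (t:ℝ)^ν ≤ (n:ℝ)^(ν+1) := by
    intro n
    rw [Finset.mul_sum, ← htel n]
    exact Finset.sum_le_sum fun t _ => (pow_succ_sub_bounds ν t).1
  have hup : ∀ n : ℕ, (n:ℝ)^(ν+1) ≤ ((ν:ℝ)+1) * (∑ t ∈ range n, (t:ℝ)^ν + (n:ℝ)^ν) := by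
    intro n
    rw [← htel n]
    calc ∑ t ∈ range n, (((t:ℝ)+1)^(ν+1) - (t:ℝ)^(ν+1))
        ≤ ∑ t ∈ range n, ((ν:ℝ)+1) * ((t:ℝ)+1)^ν :=
          Finset.sum_le_sum fun t _ => (pow_succ_sub_bounds ν t).2
      _ = ((ν:ℝ)+1) * ∑ t ∈ range n, ((t:ℝ)+1)^ν := by rw [Finset.mul_sum]
      _ ≤ ((ν:ℝ)+1) * (∑ t ∈ range n, (t:ℝ)^ν + (n:ℝ)^ν) := by
          apply mul_le_mul_of_nonneg_left _ (le_of_lt hν)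
          have : ∑ t ∈ range n, ((t:ℝ)+1)^ν = ∑ t ∈ range (n+1), (t:ℝ)^ν - 0^ν := by
            rw [Finset.sum_range_succ' (fun t : ℕ => (t:ℝ)^ν) n]
            push_cast
            ring
          rw [this, Finset.sum_range_succ]
          have : (0:ℝ) ≤ (0:ℝ)^ν := by positivity
          linarith
  apply tendsto_of_tendsto_of_tendsto_of_le_of_le'
    (g := fun n : ℕ => 1/((ν:ℝ)+1) - 1/(n:ℝ)) (h := fun _ : ℕ => 1/((ν:ℝ)+1))
  · have h1 : Tendsto (fun n : ℕ => 1/(n:ℝ)) atTop (nhds 0) := by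
      simpa using tendsto_one_div_atTop_nhds_zero_nat (𝕜 := ℝ)
    simpa using tendsto_const_nhds.sub h1
  · exact tendsto_const_nhds
  · filter_upwards [eventually_ge_atTop 1] with n hn
    have hn' : (0:ℝ) < (n:ℝ) := by exact_mod_cast Nat.lt_of_lt_of_le Nat.zero_lt_one hn
    have hnp : (0:ℝ) < (n:ℝ)^(ν+1) := pow_pos hn' _
    rw [le_div_iff₀ hnp, sub_mul]
    have hx := hup n
    have hpow : (n:ℝ)^(ν+1) = (n:ℝ)^ν * (n:ℝ) := by rw [pow_succ]
    have h1 : 1/(n:ℝ) * (n:ℝ)^(ν+1) = (n:ℝ)^ν := by rw [hpow]; field_simp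
    have h2 : 1/((ν:ℝ)+1) * (n:ℝ)^(ν+1) ≤ ∑ t ∈ range n, (t:ℝ)^ν + (n:ℝ)^ν := by
      rw [div_mul_eq_mul_div, one_mul, div_le_iff₀ hν]
      nlinarith
    linarith
  · filter_upwards with n
    have hnp : (0:ℝ) ≤ (n:ℝ)^(ν+1) := by positivity
    rcases eq_or_lt_of_le hnp with h | h
    · rw [← h]; simp; positivity
    · rw [div_le_div_iff₀ h hν]
      have := hlow n
      nlinarith

lemma squeeze_div (F G : ℕ → ℝ) (e : ℕ) (h : ∀ n : ℕ, |F n| ≤ G n)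
    (hG : Tendsto (fun n : ℕ => G n / (n:ℝ)^e) atTop (nhds 0)) :
    Tendsto (fun n : ℕ => F n / (n:ℝ)^e) atTop (nhds 0) := by
  apply squeeze_zero_norm _ hG
  intro n
  rw [Real.norm_eq_abs, abs_div, abs_pow, Nat.abs_cast]
  rcases Nat.eq_zero_or_pos n with h0 | h0
  · subst h0
    rcases Nat.eq_zero_or_pos e with he | he
    · subst he; simpa using h 0
    · simp [zero_pow (Nat.pos_iff_ne_zero.mp he)]
  · have : (0:ℝ) ≤ (n:ℝ)^e := by positivity
    exact div_le_div_of_nonneg_right (h n) this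

lemma lemZ (w u : ℕ → ℝ) (p q : ℕ) (K : ℝ) (hw : ∀ m, 0 ≤ w m)
    (hwK : ∀ n : ℕ, ∑ m ∈ Finset.range n, w m ≤ K * ((n:ℝ)+1) ^ q)
    (hu : Tendsto (fun m : ℕ => u m / (m:ℝ) ^ p) atTop (nhds 0)) (hpq : 1 ≤ p + q) :
    Tendsto (fun n : ℕ => (∑ m ∈ Finset.range n, w m * |u m|) / (n:ℝ) ^ (p+q)) atTop
      (nhds 0) := by
  rw [Metric.tendsto_atTop]
  intro ε hε
  set K' : ℝ := max K 1 with hK'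
  have hK0 : (0:ℝ) < K' := lt_of_lt_of_le one_pos (le_max_right _ _)
  set ε₁ : ℝ := ε / (2 * K' * 2^q) with hε₁def
  have hε₁ : 0 < ε₁ := by positivity
  obtain ⟨M₀, hM₀⟩ := (Metric.tendsto_atTop.mp hu) ε₁ hε₁
  set M := max M₀ 1 with hM
  have hub : ∀ m : ℕ, M ≤ m → |u m| ≤ ε₁ * (m:ℝ)^p := by
    intro m hm
    have h1 : (1:ℕ) ≤ m := le_trans (le_max_right _ _) hm
    have hmp : (0:ℝ) < (m:ℝ)^p := by
      have : (0:ℝ) < (m:ℝ) := by exact_mod_cast h1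
      positivity
    have := hM₀ m (le_trans (le_max_left _ _) hm)
    rw [Real.dist_eq, sub_zero, abs_div, abs_pow, Nat.abs_cast] at this
    rw [div_lt_iff₀ hmp] at this
    linarith
  set C : ℝ := ∑ m ∈ Finset.range M, w m * |u m| with hC
  have hCn : Tendsto (fun n : ℕ => C / (n:ℝ)^(p+q)) atTop (nhds 0) := by
    apply Tendsto.div_atTop tendsto_const_nhds
    exact (tendsto_pow_atTop (by omega)).comp tendsto_natCast_atTop_atTop
  have hCev := (Metric.tendsto_atTop.mp hCn) (ε/2) (by positivity)
  obtain ⟨N₁, hN₁⟩ := hCev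
  refine ⟨max (max M 1) N₁, fun n hn => ?_⟩
  have hnM : M ≤ n := le_trans (le_max_left _ _) (le_trans (le_max_left _ _) hn)
  have hn1 : (1:ℕ) ≤ n := le_trans (le_max_right _ _) (le_trans (le_max_left _ _) hn)
  have hnR : (0:ℝ) < (n:ℝ) := by exact_mod_cast hn1
  have hnp : (0:ℝ) < (n:ℝ)^(p+q) := by positivity
  rw [Real.dist_eq, sub_zero]
  have hsum_nonneg : (0:ℝ) ≤ ∑ m ∈ Finset.range n, w m * |u m| :=
    Finset.sum_nonneg fun m _ => mul_nonneg (hw m) (abs_nonneg _)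
  rw [abs_of_nonneg (div_nonneg hsum_nonneg (le_of_lt hnp))]
  -- split the sum
  have hsplit : ∑ m ∈ Finset.range n, w m * |u m|
      ≤ C + ε₁ * (n:ℝ)^p * (K' * ((n:ℝ)+1)^q) := by
    rw [← Finset.sum_range_add_sum_Ico (fun m => w m * |u m|) hnM, ← hC]
    have h2 : ∑ m ∈ Finset.Ico M n, w m * |u m| ≤ ε₁ * (n:ℝ)^p * (K' * ((n:ℝ)+1)^q) := by
      calc ∑ m ∈ Finset.Ico M n, w m * |u m|
          ≤ ∑ m ∈ Finset.Ico M n, w m * (ε₁ * (n:ℝ)^p) := by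
            apply Finset.sum_le_sum
            intro m hm
            rw [Finset.mem_Ico] at hm
            apply mul_le_mul_of_nonneg_left _ (hw m)
            refine (hub m hm.1).trans ?_
            apply mul_le_mul_of_nonneg_left _ (le_of_lt hε₁)
            exact pow_le_pow_left₀ (Nat.cast_nonneg m) (by exact_mod_cast le_of_lt hm.2) p
        _ = (∑ m ∈ Finset.Ico M n, w m) * (ε₁ * (n:ℝ)^p) := by rw [← Finset.sum_mul]
        _ ≤ (∑ m ∈ Finset.range n, w m) * (ε₁ * (n:ℝ)^p) := by
            apply mul_le_mul_of_nonneg_right _ (by positivity)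
            apply Finset.sum_le_sum_of_subset_of_nonneg
            · rw [Finset.range_eq_Ico]; exact Finset.Ico_subset_Ico (Nat.zero_le _) le_rfl
            · intro m _ _; exact hw m
        _ ≤ (K * ((n:ℝ)+1)^q) * (ε₁ * (n:ℝ)^p) := by
            apply mul_le_mul_of_nonneg_right (hwK n) (by positivity)
        _ ≤ (K' * ((n:ℝ)+1)^q) * (ε₁ * (n:ℝ)^p) := by
            apply mul_le_mul_of_nonneg_right _ (by positivity)
            apply mul_le_mul_of_nonneg_right (le_max_left _ _) (by positivity)
        _ = ε₁ * (n:ℝ)^p * (K' * ((n:ℝ)+1)^q) := by ring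
    linarith
  have hkey : (∑ m ∈ Finset.range n, w m * |u m|) / (n:ℝ)^(p+q)
      ≤ C / (n:ℝ)^(p+q) + ε/2 := by
    have h3 : ε₁ * (n:ℝ)^p * (K' * ((n:ℝ)+1)^q) ≤ (ε/2) * (n:ℝ)^(p+q) := by
      have hle : ((n:ℝ)+1)^q ≤ 2^q * (n:ℝ)^q := by
        rw [← mul_pow]
        have hnR1 : (1:ℝ) ≤ (n:ℝ) := by exact_mod_cast hn1
        exact pow_le_pow_left₀ (by positivity) (by linarith) q
      have h4 : ε₁ * (n:ℝ)^p * (K' * ((n:ℝ)+1)^q) ≤ ε₁ * (n:ℝ)^p * (K' * (2^q * (n:ℝ)^q)) := by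
        apply mul_le_mul_of_nonneg_left _ (by positivity)
        exact mul_le_mul_of_nonneg_left hle (le_of_lt hK0)
      have h5 : ε₁ * (n:ℝ)^p * (K' * (2^q * (n:ℝ)^q)) = (ε/2) * (n:ℝ)^(p+q) := by
        rw [hε₁def, pow_add]
        field_simp
      linarith
    rw [div_add' _ _ _ (ne_of_gt hnp)]
    apply div_le_div_of_nonneg_right _ (le_of_lt hnp)  -- careful name
    linarith
  have hClt := hN₁ n (le_trans (le_max_right _ _) hn)
  rw [Real.dist_eq, sub_zero] at hClt
  have hCpos : 0 ≤ C / (n:ℝ)^(p+q) := by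
    apply div_nonneg _ (le_of_lt hnp)
    exact Finset.sum_nonneg fun m _ => mul_nonneg (hw m) (abs_nonneg _)
  rw [abs_of_nonneg hCpos] at hClt
  linarith

lemma main_term (a : ℕ → ℝ) (L K : ℝ) (ν : ℕ)
    (hK : ∀ n : ℕ, ∑ m ∈ Finset.range n, |a m| ≤ K * ((n:ℝ)+1))
    (hS : Tendsto (fun n : ℕ => (∑ k ∈ Finset.range n, a k) / (n:ℝ)) atTop (nhds L)) :
    Tendsto (fun n : ℕ => (∑ m ∈ Finset.range n, a m * (m:ℝ)^ν) / (n:ℝ)^(ν+1)) atTop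
      (nhds (L / ((ν:ℝ)+1))) := by
  rcases Nat.eq_zero_or_pos ν with hν0 | hνpos
  · subst hν0
    simpa using hS
  -- ν ≥ 1
  set S : ℕ → ℝ := fun n => ∑ k ∈ Finset.range n, a k with hSdef
  set δ : ℕ → ℝ := fun t => ((t:ℝ)+1)^ν - (t:ℝ)^ν with hδdef
  have hδ0 : ∀ t : ℕ, 0 ≤ δ t := by
    intro t
    have := pow_le_pow_left₀ (Nat.cast_nonneg t) (by linarith : (t:ℝ) ≤ (t:ℝ)+1) ν
    simp only [hδdef]
    linarith
  have hδtel : ∀ n : ℕ, ∑ t ∈ Finset.range n, δ t = (n:ℝ)^ν := by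
    intro n
    have := Finset.sum_range_sub (fun t : ℕ => (t:ℝ)^ν) n
    simp only [Nat.cast_zero, zero_pow (Nat.pos_iff_ne_zero.mp hνpos), sub_zero] at this
    rw [← this]
    apply Finset.sum_congr rfl
    intro t _
    simp only [hδdef]
    push_cast
    ring
  have hid : ∀ n : ℕ, ∑ m ∈ Finset.range n, a m * (m:ℝ)^ν
      = S n * (n:ℝ)^ν - ∑ t ∈ Finset.range n, δ t * S (t+1) := by
    intro n
    have h1 : ∀ m : ℕ, a m * (m:ℝ)^ν = ∑ t ∈ Finset.range m, δ t * a m := by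
      intro m
      rw [← Finset.sum_mul, hδtel]
      ring
    calc ∑ m ∈ Finset.range n, a m * (m:ℝ)^ν
        = ∑ m ∈ Finset.range n, ∑ t ∈ Finset.range m, δ t * a m :=
          Finset.sum_congr rfl fun m _ => h1 m
      _ = ∑ m ∈ Finset.Ico 0 n, ∑ t ∈ Finset.Ico 0 m, δ t * a m := by
          simp only [Finset.range_eq_Ico]
      _ = ∑ t ∈ Finset.Ico 0 n, ∑ m ∈ Finset.Ico (t+1) n, δ t * a m :=
          (Finset.sum_Ico_Ico_comm' 0 n (fun t m => δ t * a m)).symm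
      _ = ∑ t ∈ Finset.range n, δ t * (S n - S (t+1)) := by
          rw [← Finset.range_eq_Ico]
          apply Finset.sum_congr rfl
          intro t ht
          rw [Finset.mem_range] at ht
          rw [← Finset.mul_sum, Finset.sum_Ico_eq_sub _ (by omega : t+1 ≤ n)]
      _ = ∑ t ∈ Finset.range n, (δ t * S n - δ t * S (t+1)) :=
          Finset.sum_congr rfl fun t _ => by ring
      _ = (∑ t ∈ Finset.range n, δ t) * S n - ∑ t ∈ Finset.range n, δ t * S (t+1) := by
          rw [Finset.sum_sub_distrib, Finset.sum_mul]
      _ = S n * (n:ℝ)^ν - ∑ t ∈ Finset.range n, δ t * S (t+1) := by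
          rw [hδtel n]; ring
  -- term 1
  have hT1 : Tendsto (fun n : ℕ => S n * (n:ℝ)^ν / (n:ℝ)^(ν+1)) atTop (nhds L) := by
    apply hS.congr'
    filter_upwards [eventually_ge_atTop 1] with n hn
    have hn' : (0:ℝ) < (n:ℝ) := by exact_mod_cast hn
    have hp : (0:ℝ) < (n:ℝ)^ν := by positivity
    rw [pow_succ]
    field_simp
    ring
  -- term A identity
  have htel2 : ∀ n : ℕ, ∑ t ∈ Finset.range n, (((t:ℝ)+1)^(ν+1) - (t:ℝ)^(ν+1)) = (n:ℝ)^(ν+1) := by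
    intro n
    have := Finset.sum_range_sub (fun t : ℕ => (t:ℝ)^(ν+1)) n
    simp only [Nat.cast_zero, zero_pow (Nat.succ_ne_zero ν), sub_zero] at this
    rw [← this]
    apply Finset.sum_congr rfl
    intro t _
    push_cast
    ring
  have hA : ∀ n : ℕ, ∑ t ∈ Finset.range n, δ t * (L * ((t:ℝ)+1))
      = L * ((n:ℝ)^(ν+1) - ∑ t ∈ Finset.range n, (t:ℝ)^ν) := by
    intro n
    have h1 : ∀ t : ℕ, δ t * (L * ((t:ℝ)+1))
        = L * ((((t:ℝ)+1)^(ν+1) - (t:ℝ)^(ν+1)) - (t:ℝ)^ν) := by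
      intro t
      simp only [hδdef]
      ring
    calc ∑ t ∈ Finset.range n, δ t * (L * ((t:ℝ)+1))
        = ∑ t ∈ Finset.range n, L * ((((t:ℝ)+1)^(ν+1) - (t:ℝ)^(ν+1)) - (t:ℝ)^ν) :=
          Finset.sum_congr rfl fun t _ => h1 t
      _ = L * ((∑ t ∈ Finset.range n, (((t:ℝ)+1)^(ν+1) - (t:ℝ)^(ν+1)))
            - ∑ t ∈ Finset.range n, (t:ℝ)^ν) := by
          rw [← Finset.mul_sum, Finset.sum_sub_distrib]
      _ = L * ((n:ℝ)^(ν+1) - ∑ t ∈ Finset.range n, (t:ℝ)^ν) := by rw [htel2 n]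
  have hTA : Tendsto (fun n : ℕ =>
      (∑ t ∈ Finset.range n, δ t * (L * ((t:ℝ)+1))) / (n:ℝ)^(ν+1)) atTop
      (nhds (L * (1 - 1/((ν:ℝ)+1)))) := by
    have hbase : Tendsto (fun n : ℕ => L * (1 - (∑ t ∈ Finset.range n, (t:ℝ)^ν)/(n:ℝ)^(ν+1)))
        atTop (nhds (L * (1 - 1/((ν:ℝ)+1)))) :=
      tendsto_const_nhds.mul (tendsto_const_nhds.sub (sum_pow_asymp ν))
    apply hbase.congr'
    filter_upwards [eventually_ge_atTop 1] with n hn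
    have hn' : (0:ℝ) < (n:ℝ) := by exact_mod_cast hn
    have hp : (0:ℝ) < (n:ℝ)^(ν+1) := by positivity
    rw [hA n]
    field_simp
  -- term B
  have hr : Tendsto (fun n : ℕ => (S n - L * (n:ℝ)) / (n:ℝ)) atTop (nhds 0) := by
    have := hS.sub (tendsto_const_nhds (x := L))
    rw [sub_self] at this
    apply this.congr'
    filter_upwards [eventually_ge_atTop 1] with n hn
    have hn' : ((n:ℝ)) ≠ 0 := by
      have : (0:ℝ) < (n:ℝ) := by exact_mod_cast hn
      exact ne_of_gt this
    field_simp
    ring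
  have hr1 : Tendsto (fun t : ℕ => (S (t+1) - L * ((t:ℝ)+1)) / ((t:ℝ)+1)) atTop (nhds 0) := by
    have := (tendsto_add_atTop_iff_nat 1).mpr hr
    apply this.congr
    intro t
    push_cast
    ring_nf
  have hu : Tendsto (fun t : ℕ => (S (t+1) - L * ((t:ℝ)+1)) / (t:ℝ)^1) atTop (nhds 0) := by
    have hq : Tendsto (fun t : ℕ => ((t:ℝ)+1)/(t:ℝ)) atTop (nhds 1) := by
      have h1 : Tendsto (fun t : ℕ => 1 + 1/(t:ℝ)) atTop (nhds 1) := by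
        have := tendsto_one_div_atTop_nhds_zero_nat (𝕜 := ℝ)
        simpa using tendsto_const_nhds.add this
      apply h1.congr'
      filter_upwards [eventually_ge_atTop 1] with t ht
      have ht' : ((t:ℝ)) ≠ 0 := by
        have : (0:ℝ) < (t:ℝ) := by exact_mod_cast ht
        exact ne_of_gt this
      field_simp
    have := hr1.mul hq
    rw [zero_mul] at this
    apply this.congr'
    filter_upwards [eventually_ge_atTop 1] with t ht
    have ht' : ((t:ℝ)) ≠ 0 := by
      have : (0:ℝ) < (t:ℝ) := by exact_mod_cast ht
      exact ne_of_gt this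
    have ht1 : ((t:ℝ)+1) ≠ 0 := by positivity
    rw [pow_one]
    field_simp
  have hTB : Tendsto (fun n : ℕ =>
      (∑ t ∈ Finset.range n, δ t * (S (t+1) - L * ((t:ℝ)+1))) / (n:ℝ)^(ν+1)) atTop (nhds 0) := by
    have hZ := lemZ δ (fun t => S (t+1) - L * ((t:ℝ)+1)) 1 ν 1 hδ0
      (fun n => by
        rw [hδtel n, one_mul]
        exact pow_le_pow_left₀ (Nat.cast_nonneg n) (by linarith) ν)
      hu (by omega)
    have h1ν : 1 + ν = ν + 1 := by omega
    rw [h1ν] at hZ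
    apply squeeze_div _ _ _ _ hZ
    intro n
    calc |∑ t ∈ Finset.range n, δ t * (S (t+1) - L * ((t:ℝ)+1))|
        ≤ ∑ t ∈ Finset.range n, |δ t * (S (t+1) - L * ((t:ℝ)+1))| :=
          Finset.abs_sum_le_sum_abs _ _
      _ = ∑ t ∈ Finset.range n, δ t * |S (t+1) - L * ((t:ℝ)+1)| := by
          apply Finset.sum_congr rfl
          intro t _
          rw [abs_mul, abs_of_nonneg (hδ0 t)]
  -- combine
  have hcomb := (hT1.sub hTA).sub hTB
  rw [sub_zero] at hcomb
  have hconst : L - L * (1 - 1/((ν:ℝ)+1)) = L / ((ν:ℝ)+1) := by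
    have : ((ν:ℝ)+1) ≠ 0 := by positivity
    field_simp
    ring
  rw [hconst] at hcomb
  apply hcomb.congr
  intro n
  rw [hid n]
  have hsplit : ∑ t ∈ Finset.range n, δ t * S (t+1)
      = ∑ t ∈ Finset.range n, δ t * (L * ((t:ℝ)+1))
        + ∑ t ∈ Finset.range n, δ t * (S (t+1) - L * ((t:ℝ)+1)) := by
    rw [← Finset.sum_add_distrib]
    apply Finset.sum_congr rfl
    intro t _
    ring
  rw [hsplit]
  ring

lemma weighted (a b : ℕ → ℝ) (L c K : ℝ) (ν : ℕ)
    (hK : ∀ n : ℕ, ∑ m ∈ Finset.range n, |a m| ≤ K * ((n:ℝ)+1))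
    (hS : Tendsto (fun n : ℕ => (∑ k ∈ Finset.range n, a k) / (n:ℝ)) atTop (nhds L))
    (hb : Tendsto (fun m : ℕ => b m / (m:ℝ)^ν) atTop (nhds c)) :
    Tendsto (fun n : ℕ => (∑ m ∈ Finset.range n, a m * b m) / (n:ℝ)^(ν+1)) atTop
      (nhds (c * L / ((ν:ℝ)+1))) := by
  have hmain : Tendsto (fun n : ℕ =>
      (∑ m ∈ Finset.range n, a m * (c * (m:ℝ)^ν)) / (n:ℝ)^(ν+1)) atTop
      (nhds (c * (L / ((ν:ℝ)+1)))) := by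
    have := (main_term a L K ν hK hS).const_mul c
    apply this.congr
    intro n
    rw [← mul_div_assoc, Finset.mul_sum]
    congr 1
    apply Finset.sum_congr rfl
    intro m _
    ring
  have herr : Tendsto (fun n : ℕ =>
      (∑ m ∈ Finset.range n, a m * (b m - c * (m:ℝ)^ν)) / (n:ℝ)^(ν+1)) atTop (nhds 0) := by
    have hu : Tendsto (fun m : ℕ => (b m - c * (m:ℝ)^ν) / (m:ℝ)^ν) atTop (nhds 0) := by
      have := hb.sub (tendsto_const_nhds (x := c))
      rw [sub_self] at this
      apply this.congr'
      filter_upwards [eventually_ge_atTop 1] with m hm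
      have hm' : (0:ℝ) < (m:ℝ) := by exact_mod_cast hm
      have hp : ((m:ℝ)^ν) ≠ 0 := by positivity
      field_simp
    have hZ := lemZ (fun m => |a m|) (fun m => b m - c * (m:ℝ)^ν) ν 1 K
      (fun m => abs_nonneg _) (fun n => by simpa using hK n) hu (by omega)
    have h1ν : ν + 1 = ν + 1 := rfl
    apply squeeze_div _ _ _ _ hZ
    intro n
    calc |∑ m ∈ Finset.range n, a m * (b m - c * (m:ℝ)^ν)|
        ≤ ∑ m ∈ Finset.range n, |a m * (b m - c * (m:ℝ)^ν)| :=
          Finset.abs_sum_le_sum_abs _ _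
      _ = ∑ m ∈ Finset.range n, |a m| * |b m - c * (m:ℝ)^ν| := by
          apply Finset.sum_congr rfl
          intro m _
          rw [abs_mul]
  have hcomb := hmain.add herr
  rw [add_zero] at hcomb
  have : c * (L / ((ν:ℝ)+1)) = c * L / ((ν:ℝ)+1) := by ring
  rw [this] at hcomb
  apply hcomb.congr
  intro n
  rw [← add_div, ← Finset.sum_add_distrib]
  congr 1
  apply Finset.sum_congr rfl
  intro m _
  ring


lemma iterSumVec_succ {d ν : ℕ} (ξ : ℕ → EuclideanSpace ℝ (Fin d)) (i : Fin (ν+1) → Fin d)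
    (n : ℕ) :
    iterSumVec ξ i n
      = ∑ m ∈ Finset.range n,
          iterSumVec ξ (fun j => i j.castSucc) m * ξ m (i (Fin.last ν)) := by
  unfold iterSumVec
  rw [← Finset.sum_fiberwise_of_maps_to
    (g := fun k : Fin (ν+1) → Fin n => ((k (Fin.last ν) : ℕ)))
    (t := Finset.range n) (fun k _ => Finset.mem_range.mpr (k (Fin.last ν)).isLt)]
  apply Finset.sum_congr rfl
  intro m hm
  have hmn : m < n := Finset.mem_range.mp hm
  rw [Finset.sum_mul]
  refine Finset.sum_bij'
    (fun (k : Fin (ν+1) → Fin n) (hk : k ∈ _) => fun (j : Fin ν) =>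
      (⟨(k j.castSucc : ℕ), by
        rw [Finset.mem_filter, Finset.mem_filter] at hk
        have h1 := hk.1.2 j.castSucc (Fin.last ν) (Fin.castSucc_lt_last j)
        have h2 := hk.2
        omega⟩ : Fin m))
    (fun (k' : Fin ν → Fin m) (hk' : k' ∈ _) =>
      Fin.snoc (fun j => Fin.castLE (le_of_lt hmn) (k' j)) (⟨m, hmn⟩ : Fin n))
    ?_ ?_ ?_ ?_ ?_
  · -- hi
    intro k hk
    rw [Finset.mem_filter] at hk ⊢
    refine ⟨Finset.mem_univ _, ?_⟩
    intro p q hpq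
    rw [Fin.mk_lt_mk]
    rw [Finset.mem_filter] at hk
    exact hk.1.2 p.castSucc q.castSucc (Fin.castSucc_lt_castSucc_iff.mpr hpq)
  · -- hj
    intro k' hk'
    rw [Finset.mem_filter] at hk'
    rw [Finset.mem_filter]
    constructor
    · rw [Finset.mem_filter]
      refine ⟨Finset.mem_univ _, ?_⟩
      intro p q hpq
      induction q using Fin.lastCases with
      | last =>
        have hp : p ≠ Fin.last ν := ne_of_lt hpq
        obtain ⟨p', rfl⟩ := Fin.exists_castSucc_eq.mpr hp
        simp only [Fin.snoc_castSucc, Fin.snoc_last, Fin.lt_def, Fin.coe_castLE]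
        exact (k' p').isLt
      | cast q' =>
        have hp : p ≠ Fin.last ν := ne_of_lt (lt_of_lt_of_le hpq (Fin.le_last _))
        obtain ⟨p', rfl⟩ := Fin.exists_castSucc_eq.mpr hp
        simp only [Fin.snoc_castSucc, Fin.lt_def, Fin.coe_castLE]
        have := hk'.2 p' q' (Fin.castSucc_lt_castSucc_iff.mp hpq)
        exact this
    · simp only [Fin.snoc_last]
  · -- left_inv
    intro k hk
    rw [Finset.mem_filter] at hk
    funext j
    induction j using Fin.lastCases with
    | last =>
      simp only [Fin.snoc_last]
      exact Fin.ext hk.2.symm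
    | cast j' =>
      simp only [Fin.snoc_castSucc]
      exact Fin.ext rfl
  · -- right_inv
    intro k' hk'
    funext j
    simp only [Fin.snoc_castSucc]
    exact Fin.ext rfl
  · -- h
    intro k hk
    rw [Finset.mem_filter] at hk
    rw [Fin.prod_univ_castSucc]
    congr 1
    rw [hk.2]

lemma coord_abs_le_norm {d : ℕ} (x : EuclideanSpace ℝ (Fin d)) (j : Fin d) : |x j| ≤ ‖x‖ := by
  rw [EuclideanSpace.norm_eq]
  calc |x j| = Real.sqrt (‖x j‖^2) := by
        rw [Real.sqrt_sq_eq_abs, Real.norm_eq_abs, abs_abs]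
    _ ≤ Real.sqrt (∑ i, ‖x i‖^2) := by
        apply Real.sqrt_le_sqrt
        exact Finset.single_le_sum (f := fun i => ‖x i‖^2) (fun i _ => by positivity)
          (Finset.mem_univ j)


theorem iterated_ergodic_vector {d : ℕ} (ξ : ℕ → EuclideanSpace ℝ (Fin d))
    (Q : EuclideanSpace ℝ (Fin d))
    (hbdd : Filter.IsBoundedUnder (· ≤ ·) atTop
      (fun n : ℕ => (∑ k ∈ Finset.range (n + 1), ‖ξ k‖) / n))
    (hQ : Tendsto (fun n : ℕ => (n : ℝ)⁻¹ • ∑ k ∈ Finset.range (n + 1), ξ k)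
      atTop (nhds Q)) :
    ∀ ν : ℕ, 1 ≤ ν → ∀ i : Fin ν → Fin d,
      Tendsto (fun n : ℕ => iterSumVec ξ i n / (n : ℝ) ^ ν) atTop
        (nhds ((∏ j : Fin ν, Q (i j)) / (Nat.factorial ν : ℝ))) := by
  -- global bound on partial sums of norms
  obtain ⟨C, hC⟩ := hbdd
  rw [Filter.eventually_map] at hC
  obtain ⟨N, hN⟩ := Filter.eventually_atTop.mp hC
  set T : ℕ → ℝ := fun n => ∑ k ∈ Finset.range n, ‖ξ k‖ with hT
  have hTmono : ∀ {p q : ℕ}, p ≤ q → T p ≤ T q := by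
    intro p q hpq
    apply Finset.sum_le_sum_of_subset_of_nonneg (Finset.range_subset_range.mpr hpq)
    intro k _ _
    exact norm_nonneg _
  set K : ℝ := max (max C 0) (T (N+2)) with hKdef
  have hK0 : 0 ≤ K := le_trans (le_max_right C 0) (le_max_left _ _)
  have hKC : C ≤ K := le_trans (le_max_left C 0) (le_max_left _ _)
  have hKbound : ∀ n : ℕ, T n ≤ K * ((n:ℝ)+1) := by
    intro n
    rcases le_or_gt n (N+2) with h | h
    · calc T n ≤ T (N+2) := hTmono h
        _ ≤ K := le_max_right _ _
        _ ≤ K * ((n:ℝ)+1) := le_mul_of_one_le_right hK0 (by have : (0:ℝ) ≤ (n:ℝ) := Nat.cast_nonneg n; linarith)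
    · obtain ⟨m, rfl⟩ : ∃ m, n = m + 1 := ⟨n-1, by omega⟩
      have hmN : m ≥ N := by omega
      have hm1 : (1:ℝ) ≤ (m:ℝ) := by exact_mod_cast (by omega : 1 ≤ m)
      have hthis : (∑ k ∈ Finset.range (m+1), ‖ξ k‖) / (m:ℝ) ≤ C := hN m hmN
      rw [div_le_iff₀ (by linarith : (0:ℝ) < (m:ℝ))] at hthis
      calc T (m+1) ≤ C * m := hthis
        _ ≤ K * ((m:ℝ)+1+1) := by nlinarith
        _ = K * (((m+1:ℕ):ℝ)+1) := by push_cast; ring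
  have hKj : ∀ j : Fin d, ∀ n : ℕ, ∑ m ∈ Finset.range n, |ξ m j| ≤ K * ((n:ℝ)+1) := by
    intro j n
    refine le_trans ?_ (hKbound n)
    exact Finset.sum_le_sum fun m _ => coord_abs_le_norm (ξ m) j
  -- coordinate-wise averages
  have hQj : ∀ j : Fin d,
      Tendsto (fun n : ℕ => (∑ k ∈ Finset.range n, ξ k j) / (n:ℝ)) atTop (nhds (Q j)) := by
    intro j
    have h0 : Tendsto (fun n : ℕ => (n:ℝ)⁻¹ * ∑ k ∈ Finset.range (n+1), ξ k j) atTop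
        (nhds (Q j)) := by
      have hc := ((EuclideanSpace.proj (𝕜 := ℝ) j).continuous.tendsto Q).comp hQ
      have heq : ∀ n : ℕ, (EuclideanSpace.proj (𝕜 := ℝ) j)
          ((n:ℝ)⁻¹ • ∑ k ∈ Finset.range (n+1), ξ k)
          = (n:ℝ)⁻¹ * ∑ k ∈ Finset.range (n+1), ξ k j := by
        intro n
        rw [map_smul, map_sum]
        simp [smul_eq_mul]
      have hc' : Tendsto (fun n : ℕ => (EuclideanSpace.proj (𝕜 := ℝ) j)
          ((n:ℝ)⁻¹ • ∑ k ∈ Finset.range (n+1), ξ k)) atTop (nhds (Q j)) := by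
        exact hc
      exact hc'.congr heq
    rw [← tendsto_add_atTop_iff_nat 1]
    have hfrac : Tendsto (fun n : ℕ => (n:ℝ)/((n:ℝ)+1)) atTop (nhds 1) :=
      tendsto_natCast_div_add_atTop (1:ℝ)
    have hmul := h0.mul hfrac
    rw [mul_one] at hmul
    apply hmul.congr'
    filter_upwards [eventually_ge_atTop 1] with n hn
    have hn' : (0:ℝ) < (n:ℝ) := by exact_mod_cast hn
    have hn1 : ((n:ℝ)+1) ≠ 0 := by positivity
    push_cast
    field_simp
  -- main induction
  suffices H : ∀ ν : ℕ, ∀ i : Fin ν → Fin d,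
      Tendsto (fun n : ℕ => iterSumVec ξ i n / (n : ℝ) ^ ν) atTop
        (nhds ((∏ j : Fin ν, Q (i j)) / (Nat.factorial ν : ℝ))) by
    exact fun ν _ i => H ν i
  intro ν
  induction ν with
  | zero =>
    intro i
    have h1 : ∀ n : ℕ, iterSumVec ξ i n = 1 := by
      intro n
      unfold iterSumVec
      rw [Finset.filter_true_of_mem (fun k _ => fun p q _ => p.elim0)]
      simp
    simp only [h1]
    simp only [pow_zero, Nat.factorial_zero, Nat.cast_one, div_one, Finset.univ_eq_empty,
      Finset.prod_empty]
    exact tendsto_const_nhds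
  | succ σ ih =>
    intro i
    have hb := ih (fun j => i j.castSucc)
    have hw := weighted (fun m => ξ m (i (Fin.last σ)))
      (fun m => iterSumVec ξ (fun j => i j.castSucc) m)
      (Q (i (Fin.last σ))) ((∏ j : Fin σ, Q (i j.castSucc)) / (Nat.factorial σ : ℝ)) K σ
      (hKj (i (Fin.last σ))) (hQj (i (Fin.last σ))) hb
    have hconst : (∏ j : Fin σ, Q (i j.castSucc)) / (Nat.factorial σ : ℝ)
        * Q (i (Fin.last σ)) / ((σ:ℝ)+1)
        = (∏ j : Fin (σ+1), Q (i j)) / (Nat.factorial (σ+1) : ℝ) := by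
      have h1 : (0:ℝ) < (Nat.factorial σ : ℝ) := by exact_mod_cast Nat.factorial_pos σ
      have h2 : (0:ℝ) < (σ:ℝ)+1 := by positivity
      rw [Fin.prod_univ_castSucc, Nat.factorial_succ]
      push_cast
      rw [div_mul_eq_mul_div, div_div, div_eq_div_iff (by positivity) (by positivity)]
      ring
    rw [hconst] at hw
    apply hw.congr
    intro n
    rw [iterSumVec_succ ξ i n]
    congr 1
    apply Finset.sum_congr rfl
    intro m _
    ring
end

section
/- Let ξ : ℕ → ℝ be a real sequence with limsup_{n→∞} n^{-1} ∑_{k=0}^n |ξ(k)| < ∞ and lim_{n→∞} n^{-1} ∑_{k=0}^n ξ(k) = Q. Then lim_{n→∞} n^{-2} ∑_{0 ≤ k_1 < k_2 < n} ξ(k_1) ξ(k_2) = Q²/2. -/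
open Filter Finset

private lemma double_sum_id (ξ : ℕ → ℝ) (n : ℕ) :
    ∑ k₂ ∈ Finset.range n, ∑ k₁ ∈ Finset.range k₂, ξ k₁ * ξ k₂ =
      ((∑ k ∈ Finset.range n, ξ k) ^ 2 - ∑ k ∈ Finset.range n, (ξ k) ^ 2) / 2 := by
  induction n with
  | zero => simp
  | succ n ih =>
    rw [Finset.sum_range_succ, ih, Finset.sum_range_succ (f := ξ),
      Finset.sum_range_succ (f := fun k => (ξ k) ^ 2), ← Finset.sum_mul]
    ring

theorem iterated_ergodic_two (ξ : ℕ → ℝ) (Q : ℝ)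
    (hbdd : Filter.IsBoundedUnder (· ≤ ·) atTop
      (fun n : ℕ => (∑ k ∈ Finset.range (n + 1), |ξ k|) / n))
    (hQ : Tendsto (fun n : ℕ => (∑ k ∈ Finset.range (n + 1), ξ k) / n) atTop (nhds Q)) :
    Tendsto (fun n : ℕ =>
        (∑ k₂ ∈ Finset.range n, ∑ k₁ ∈ Finset.range k₂, ξ k₁ * ξ k₂) / (n : ℝ) ^ 2)
      atTop (nhds (Q ^ 2 / 2)) := by
  set T : ℕ → ℝ := fun n => ∑ k ∈ Finset.range n, ξ k with hTdef
  -- Step 2: T n / n → Q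
  have hquot : Tendsto (fun n : ℕ => (n : ℝ) / (n + 1)) atTop (nhds 1) :=
    tendsto_natCast_div_add_atTop 1
  have hT : Tendsto (fun n : ℕ => T n / n) atTop (nhds Q) := by
    rw [← Filter.tendsto_add_atTop_iff_nat 1]
    have h1 : Tendsto (fun n : ℕ => (T (n + 1) / n) * ((n : ℝ) / (n + 1)))
        atTop (nhds (Q * 1)) := hQ.mul hquot
    rw [mul_one] at h1
    refine h1.congr' ?_
    filter_upwards [eventually_ge_atTop 1] with n hn
    have hn' : (n : ℝ) ≠ 0 := by positivity
    push_cast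
    field_simp
  -- Step 3: ξ n / n → 0
  have hxi : Tendsto (fun n : ℕ => ξ n / n) atTop (nhds 0) := by
    have := hQ.sub hT
    rw [sub_self] at this
    refine this.congr fun n => ?_
    show (T (n + 1)) / n - T n / n = ξ n / n
    rw [hTdef]
    simp [Finset.sum_range_succ, add_div]
  -- Step 4: linear bound on the sum of |ξ|
  obtain ⟨C0, hC0⟩ := hbdd
  simp only [Filter.eventually_map, Filter.EventuallyLE, Pi.zero_apply] at hC0
  set C : ℝ := max C0 1 with hCdef
  have hCpos : 0 < C := lt_of_lt_of_le one_pos (le_max_right _ _)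
  have habs : ∀ᶠ n : ℕ in atTop, ∑ k ∈ Finset.range n, |ξ k| ≤ C * n := by
    obtain ⟨N₁, hN₁⟩ := Filter.eventually_atTop.mp hC0
    rw [Filter.eventually_atTop]
    refine ⟨N₁ + 2, fun m hm => ?_⟩
    obtain ⟨n, rfl⟩ : ∃ n, m = n + 1 := ⟨m - 1, by omega⟩
    have hn : N₁ ≤ n := by omega
    have h := hN₁ n hn
    have hnpos : (0 : ℝ) < n := by
      have : 1 ≤ n := by omega
      exact_mod_cast Nat.lt_of_lt_of_le Nat.zero_lt_one this
    have h2 : ∑ k ∈ Finset.range (n + 1), |ξ k| ≤ C0 * n := by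
      rwa [div_le_iff₀ hnpos] at h
    have hCC : C0 ≤ C := le_max_left _ _
    calc ∑ k ∈ Finset.range (n + 1), |ξ k| ≤ C0 * n := h2
      _ ≤ C * ((n : ℝ) + 1) := by nlinarith [hCpos.le, (Nat.cast_nonneg n : (0:ℝ) ≤ n)]
      _ = C * ((n + 1 : ℕ) : ℝ) := by push_cast; ring
  -- Step 5: (∑ ξ²)/n² → 0
  set s : ℕ → ℝ := fun n => ∑ k ∈ Finset.range n, (ξ k) ^ 2 with hsdef
  have hs_nonneg : ∀ n, 0 ≤ s n := fun n => Finset.sum_nonneg fun k _ => sq_nonneg _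
  have hs : Tendsto (fun n : ℕ => s n / (n : ℝ) ^ 2) atTop (nhds 0) := by
    rw [NormedAddCommGroup.tendsto_nhds_zero]
    intro ε hε
    have hε2 : (0 : ℝ) < ε / 2 := by linarith
    set ε' : ℝ := ε / (2 * C) with hε'def
    have hε' : 0 < ε' := div_pos hε (by linarith)
    -- eventually |ξ k| ≤ ε' * k
    have hxi' : ∀ᶠ k : ℕ in atTop, |ξ k| ≤ ε' * k := by
      have := (NormedAddCommGroup.tendsto_nhds_zero.mp hxi) ε' hε'
      filter_upwards [this, eventually_ge_atTop 1] with k hk hk1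
      have hkpos : (0 : ℝ) < k := by exact_mod_cast hk1
      have : |ξ k| / k < ε' := by
        rwa [Real.norm_eq_abs, abs_div, abs_of_pos hkpos] at hk
      rw [div_lt_iff₀ hkpos] at this
      linarith
    obtain ⟨M, hM⟩ := Filter.eventually_atTop.mp hxi'
    set A : ℝ := s M with hAdef
    have hA : 0 ≤ A := hs_nonneg M
    -- eventually A / n^2 ≤ ε/2
    have hA2 : ∀ᶠ n : ℕ in atTop, A / (n : ℝ) ^ 2 < ε / 2 := by
      have h0 : Tendsto (fun n : ℕ => A / (n : ℝ)) atTop (nhds 0) :=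
        tendsto_const_div_atTop_nhds_zero_nat A
      have h1 : ∀ᶠ n : ℕ in atTop, A / (n : ℝ) < ε / 2 :=
        h0.eventually (eventually_lt_nhds hε2)
      filter_upwards [h1, eventually_ge_atTop 1] with n hn hn1
      have hnpos : (0 : ℝ) < n := by exact_mod_cast hn1
      have hn1' : (1 : ℝ) ≤ n := by exact_mod_cast hn1
      have : A / (n : ℝ) ^ 2 ≤ A / (n : ℝ) :=
        div_le_div_of_nonneg_left hA hnpos (by nlinarith)
      linarith
    filter_upwards [habs, hA2, eventually_ge_atTop (M + 1)] with n hn hn2 hnM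
    have hnpos : (0 : ℝ) < n := by
      have : 1 ≤ n := by omega
      exact_mod_cast Nat.lt_of_lt_of_le Nat.zero_lt_one this
    -- split the sum
    have hsplit : s n = A + ∑ k ∈ Finset.Ico M n, (ξ k) ^ 2 := by
      rw [hsdef, hAdef]
      simp only [hsdef]
      rw [Finset.range_eq_Ico, Finset.range_eq_Ico]
      exact (Finset.sum_Ico_consecutive (f := fun k => (ξ k) ^ 2) (Nat.zero_le M) (by omega : M ≤ n)).symm
    have htail : ∑ k ∈ Finset.Ico M n, (ξ k) ^ 2 ≤ ε' * n * ∑ k ∈ Finset.range n, |ξ k| := by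
      calc ∑ k ∈ Finset.Ico M n, (ξ k) ^ 2
          ≤ ∑ k ∈ Finset.Ico M n, ε' * n * |ξ k| := by
            apply Finset.sum_le_sum
            intro k hk
            obtain ⟨hk1, hk2⟩ := Finset.mem_Ico.mp hk
            have h1 : |ξ k| ≤ ε' * k := hM k hk1
            have h2 : (k : ℝ) ≤ n := by exact_mod_cast Nat.le_of_lt hk2
            nlinarith [mul_le_mul_of_nonneg_right h1 (abs_nonneg (ξ k)),
              mul_le_mul_of_nonneg_right (mul_le_mul_of_nonneg_left h2 hε'.le)
                (abs_nonneg (ξ k)), sq_abs (ξ k)]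
        _ = ε' * n * ∑ k ∈ Finset.Ico M n, |ξ k| := by rw [Finset.mul_sum]
        _ ≤ ε' * n * ∑ k ∈ Finset.range n, |ξ k| := by
            apply mul_le_mul_of_nonneg_left _ (by positivity)
            rw [Finset.range_eq_Ico]
            exact Finset.sum_le_sum_of_subset_of_nonneg
              (Finset.Ico_subset_Ico (Nat.zero_le _) le_rfl)
              (fun k _ _ => abs_nonneg _)
    have hbound : s n ≤ A + (ε / 2) * (n : ℝ) ^ 2 := by
      have h3 : ε' * n * ∑ k ∈ Finset.range n, |ξ k| ≤ ε' * n * (C * n) :=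
        mul_le_mul_of_nonneg_left hn (by positivity)
      have h4 : ε' * n * (C * n) = (ε / 2) * (n : ℝ) ^ 2 := by
        rw [hε'def]
        field_simp
      rw [hsplit]
      linarith
    have : s n / (n : ℝ) ^ 2 ≤ A / (n : ℝ) ^ 2 + ε / 2 := by
      rw [div_add' _ _ _ (by positivity : ((n : ℝ) ^ 2) ≠ 0)]
      apply div_le_div_of_nonneg_right ?_ (by positivity)
      · linarith
    rw [Real.norm_eq_abs, abs_of_nonneg (by positivity)]
    linarith
  -- Step 6: combine
  have hTsq : Tendsto (fun n : ℕ => (T n) ^ 2 / (n : ℝ) ^ 2) atTop (nhds (Q ^ 2)) := by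
    refine (hT.pow 2).congr fun n => ?_
    rw [div_pow]
  have hmain : Tendsto (fun n : ℕ => ((T n) ^ 2 / (n : ℝ) ^ 2 - s n / (n : ℝ) ^ 2) / 2)
      atTop (nhds ((Q ^ 2 - 0) / 2)) := (hTsq.sub hs).div_const 2
  rw [sub_zero] at hmain
  refine hmain.congr fun n => ?_
  rw [double_sum_id ξ n, hTdef, hsdef]
  ring
end

section
/- Let (Ω, F, P) be a probability space, F : Ω → Ω an ergodic measure-preserving map, and g : Ω → ℝ integrable with ∫ g dP = Q. Set ξ(k) = g ∘ F^k. Then almost surely lim_{n→∞} n^{-2} ∑_{0 ≤ k_1 < k_2 < n} ξ(k_1) ξ(k_2) = Q²/2. -/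
open Filter Finset MeasureTheory

/-! ### Pure sequence lemmas -/

lemma sum_lt_identity (x : ℕ → ℝ) (n : ℕ) :
    ∑ k₂ ∈ Finset.range n, ∑ k₁ ∈ Finset.range k₂, x k₁ * x k₂
      = ((∑ k ∈ Finset.range n, x k) ^ 2 - ∑ k ∈ Finset.range n, (x k) ^ 2) / 2 := by
  induction n with
  | zero => simp
  | succ n ih =>
      rw [Finset.sum_range_succ _ n, ih, ← Finset.sum_mul, Finset.sum_range_succ x n,
        Finset.sum_range_succ (fun k => (x k) ^ 2) n]
      ring

lemma tendsto_div_of_linear_bound (u : ℕ → ℝ) (Q : ℝ)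
    (h : ∀ ε : ℝ, 0 < ε →
      ∃ C : ℝ, ∀ n : ℕ, |u (n + 1) - ((n : ℝ) + 1) * Q| ≤ ((n : ℝ) + 1) * ε + C) :
    Tendsto (fun n : ℕ => u n / n) atTop (nhds Q) := by
  rw [Metric.tendsto_atTop]
  intro δ hδ
  obtain ⟨C, hC⟩ := h (δ / 2) (by positivity)
  obtain ⟨N₀, hN₀⟩ := exists_nat_gt (2 * |C| / δ)
  refine ⟨N₀ + 1, fun n hn => ?_⟩
  obtain ⟨m, rfl⟩ : ∃ m, n = m + 1 := ⟨n - 1, by omega⟩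
  have hm : (0 : ℝ) < (m : ℝ) + 1 := by positivity
  have hmN : 2 * |C| / δ < (m : ℝ) + 1 := by
    have h1 : (N₀ : ℝ) ≤ (m : ℝ) + 1 := by exact_mod_cast Nat.le_of_succ_le hn
    linarith
  have hCm : |C| / ((m : ℝ) + 1) < δ / 2 := by
    rw [div_lt_iff₀ hm]
    rw [div_lt_iff₀ hδ] at hmN
    nlinarith
  rw [Real.dist_eq]
  push_cast
  have e1 : u (m + 1) / ((m : ℝ) + 1) - Q = (u (m + 1) - ((m : ℝ) + 1) * Q) / ((m : ℝ) + 1) := by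
    field_simp
  rw [e1, abs_div, abs_of_pos hm]
  have h1 : |u (m + 1) - ((m : ℝ) + 1) * Q| / ((m : ℝ) + 1)
      ≤ (((m : ℝ) + 1) * (δ / 2) + C) / ((m : ℝ) + 1) := by
    gcongr
    exact hC m
  have e2 : (((m : ℝ) + 1) * (δ / 2) + C) / ((m : ℝ) + 1) = δ / 2 + C / ((m : ℝ) + 1) := by
    field_simp
  have h3 : C / ((m : ℝ) + 1) ≤ |C| / ((m : ℝ) + 1) := by
    gcongr
    exact le_abs_self C
  rw [e2] at h1
  linarith

lemma abs_div_tendsto (x : ℕ → ℝ) (L : ℝ)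
    (hB : Tendsto (fun n : ℕ => (∑ k ∈ Finset.range n, |x k|) / n) atTop (nhds L)) :
    Tendsto (fun k : ℕ => |x k| / ((k : ℝ) + 1)) atTop (nhds 0) := by
  have T1 : Tendsto (fun k : ℕ => (∑ j ∈ Finset.range (k + 1), |x j|) / ((k : ℝ) + 1))
      atTop (nhds L) := by
    refine (hB.comp (tendsto_add_atTop_nat 1)).congr fun k => ?_
    simp only [Function.comp]
    push_cast
    ring_nf
  have T2 : Tendsto (fun k : ℕ => (∑ j ∈ Finset.range k, |x j|) / ((k : ℝ) + 1))
      atTop (nhds L) := by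
    have hq : Tendsto (fun k : ℕ => ((k : ℝ) / ((k : ℝ) + 1))) atTop (nhds 1) :=
      tendsto_natCast_div_add_atTop (1 : ℝ)
    have hmul := hB.mul hq
    rw [mul_one] at hmul
    apply hmul.congr'
    filter_upwards [eventually_ge_atTop 1] with k hk
    have hk0 : (k : ℝ) ≠ 0 := Nat.cast_ne_zero.mpr (by omega)
    field_simp
  have hsub := T1.sub T2
  rw [sub_self] at hsub
  refine hsub.congr fun k => ?_
  rw [Finset.sum_range_succ]
  ring

lemma sq_sum_tendsto (x : ℕ → ℝ) (L : ℝ)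
    (hB : Tendsto (fun n : ℕ => (∑ k ∈ Finset.range n, |x k|) / n) atTop (nhds L)) :
    Tendsto (fun n : ℕ => (∑ k ∈ Finset.range n, (x k) ^ 2) / (n : ℝ) ^ 2) atTop (nhds 0) := by
  have ht := abs_div_tendsto x L hB
  have hL : 0 ≤ L :=
    ge_of_tendsto hB (Eventually.of_forall fun n => by positivity)
  rw [Metric.tendsto_atTop]
  intro δ hδ
  have hL1 : 0 < L + 1 := by linarith
  set ε := δ / (2 * (L + 1)) with hεdef
  have hεpos : 0 < ε := by positivity
  obtain ⟨N₁, hN₁⟩ := Metric.tendsto_atTop.mp ht ε hεpos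
  have hxk : ∀ k, N₁ ≤ k → |x k| ≤ ε * ((k : ℝ) + 1) := by
    intro k hk
    have h0 := hN₁ k hk
    rw [Real.dist_eq, sub_zero] at h0
    have hknn : (0 : ℝ) < (k : ℝ) + 1 := by positivity
    have h1 : |x k| / ((k : ℝ) + 1) < ε := lt_of_abs_lt h0
    rw [div_lt_iff₀ hknn] at h1
    linarith
  obtain ⟨N₂, hN₂⟩ := Metric.tendsto_atTop.mp hB 1 one_pos
  have hBn : ∀ n, N₂ ≤ n → (∑ k ∈ Finset.range n, |x k|) / n ≤ L + 1 := by
    intro n hn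
    have h0 := hN₂ n hn
    rw [Real.dist_eq] at h0
    have := abs_lt.mp h0
    linarith [this.2]
  set K := ∑ k ∈ Finset.range N₁, (x k) ^ 2 with hKdef
  have hK0 : 0 ≤ K := Finset.sum_nonneg fun _ _ => sq_nonneg _
  obtain ⟨N₃, hN₃⟩ := exists_nat_gt (2 * K / δ)
  refine ⟨max (max (N₁ + 1) N₂) (N₃ + 1), fun n hn => ?_⟩
  obtain ⟨h12, h3⟩ := max_le_iff.mp hn
  obtain ⟨h1, h2⟩ := max_le_iff.mp h12
  have hnpos : (0 : ℝ) < (n : ℝ) := by exact_mod_cast (by omega : 0 < n)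
  have hsplit : ∑ k ∈ Finset.range n, (x k) ^ 2
      = K + ∑ k ∈ Finset.Ico N₁ n, (x k) ^ 2 := by
    rw [hKdef, Finset.sum_range_add_sum_Ico _ (by omega : N₁ ≤ n)]
  set B := ∑ k ∈ Finset.range n, |x k| with hBdef
  have hB0 : 0 ≤ B := Finset.sum_nonneg fun _ _ => abs_nonneg _
  have hbound : ∑ k ∈ Finset.Ico N₁ n, (x k) ^ 2 ≤ ε * n * B := by
    calc ∑ k ∈ Finset.Ico N₁ n, (x k) ^ 2
        ≤ ∑ k ∈ Finset.Ico N₁ n, ε * n * |x k| := by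
          apply Finset.sum_le_sum
          intro k hk
          obtain ⟨hk1, hk2⟩ := Finset.mem_Ico.mp hk
          have ha1 : |x k| ≤ ε * ((k : ℝ) + 1) := hxk k hk1
          have ha2 : ((k : ℝ) + 1) ≤ (n : ℝ) := by exact_mod_cast (by omega : k + 1 ≤ n)
          have he : (x k) ^ 2 = |x k| * |x k| := by rw [← sq_abs, sq]
          rw [he]
          have hxnn := abs_nonneg (x k)
          have hstep1 : |x k| * |x k| ≤ (ε * ((k : ℝ) + 1)) * |x k| :=
            mul_le_mul_of_nonneg_right ha1 hxnn
          have hstep2 : (ε * ((k : ℝ) + 1)) * |x k| ≤ ε * (n : ℝ) * |x k| := by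
            apply mul_le_mul_of_nonneg_right _ hxnn
            exact mul_le_mul_of_nonneg_left ha2 (le_of_lt hεpos)
          linarith
      _ ≤ ∑ k ∈ Finset.range n, ε * n * |x k| := by
          apply Finset.sum_le_sum_of_subset_of_nonneg
          · intro k hk
            rw [Finset.mem_range]
            exact (Finset.mem_Ico.mp hk).2
          · intro k _ _
            positivity
      _ = ε * n * B := by rw [hBdef, Finset.mul_sum]
  have hCn0 : 0 ≤ ∑ k ∈ Finset.range n, (x k) ^ 2 :=
    Finset.sum_nonneg fun _ _ => sq_nonneg _
  rw [Real.dist_eq, sub_zero, abs_of_nonneg (by positivity)]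
  have step1 : (∑ k ∈ Finset.range n, (x k) ^ 2) / (n : ℝ) ^ 2
      ≤ K / (n : ℝ) ^ 2 + ε * (B / n) := by
    rw [hsplit, add_div]
    have e : ε * n * B / (n : ℝ) ^ 2 = ε * (B / n) := by
      field_simp
    have : (∑ k ∈ Finset.Ico N₁ n, (x k) ^ 2) / (n : ℝ) ^ 2 ≤ ε * n * B / (n : ℝ) ^ 2 := by
      gcongr
    rw [e] at this
    linarith
  have hB' : B / n ≤ L + 1 := hBn n h2
  have hBdiv0 : 0 ≤ B / n := by positivity
  have hεB : ε * (B / n) ≤ δ / 2 := by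
    have : ε * (B / n) ≤ ε * (L + 1) := by nlinarith
    have e : ε * (L + 1) = δ / 2 := by
      rw [hεdef]
      field_simp
    linarith
  have hKn : K / (n : ℝ) ^ 2 < δ / 2 := by
    have hnn : 2 * K / δ < (n : ℝ) := by
      have : (N₃ : ℝ) ≤ (n : ℝ) := by exact_mod_cast (by omega : N₃ ≤ n)
      linarith
    have hle : K / (n : ℝ) ^ 2 ≤ K / (n : ℝ) := by
      have hn1 : (1 : ℝ) ≤ (n : ℝ) := by exact_mod_cast (by omega : 1 ≤ n)
      apply div_le_div_of_nonneg_left hK0 hnpos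
      nlinarith
    have h4 : K / (n : ℝ) < δ / 2 := by
      rw [div_lt_iff₀ hnpos]
      rw [div_lt_iff₀ hδ] at hnn
      nlinarith
    linarith
  linarith

lemma double_sum_tendsto (x : ℕ → ℝ) (Q L : ℝ)
    (hA : Tendsto (fun n : ℕ => (∑ k ∈ Finset.range n, x k) / n) atTop (nhds Q))
    (hB : Tendsto (fun n : ℕ => (∑ k ∈ Finset.range n, |x k|) / n) atTop (nhds L)) :
    Tendsto (fun n : ℕ =>
        (∑ k₂ ∈ Finset.range n, ∑ k₁ ∈ Finset.range k₂, x k₁ * x k₂) / (n : ℝ) ^ 2)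
      atTop (nhds (Q ^ 2 / 2)) := by
  have h0 := sq_sum_tendsto x L hB
  have hA2 : Tendsto (fun n : ℕ => ((∑ k ∈ Finset.range n, x k) / n) ^ 2)
      atTop (nhds (Q ^ 2)) := hA.pow 2
  have hfin := (hA2.sub h0).div_const 2
  rw [sub_zero] at hfin
  refine hfin.congr fun n => ?_
  rw [sum_lt_identity]
  ring

/-! ### Maximal ergodic theorem -/

section Ergodic

variable {Ω : Type*} [MeasurableSpace Ω]

lemma birkhoffSum_measurable {F : Ω → Ω} {f : Ω → ℝ} (hF : Measurable F) (hf : Measurable f)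
    (n : ℕ) : Measurable (birkhoffSum F f n) := by
  have : birkhoffSum F f n = fun ω => ∑ k ∈ Finset.range n, f (F^[k] ω) := rfl
  rw [this]
  exact Finset.measurable_sum _ fun k _ => hf.comp (hF.iterate k)

lemma birkhoffSum_integrable {P : Measure Ω} {F : Ω → Ω} {f : Ω → ℝ}
    (hF : MeasurePreserving F P P) (hfi : Integrable f P) (n : ℕ) :
    Integrable (birkhoffSum F f n) P := by
  have : birkhoffSum F f n = fun ω => ∑ k ∈ Finset.range n, f (F^[k] ω) := rfl
  rw [this]
  apply integrable_finset_sum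
  intro k _
  exact ((hF.iterate k).integrable_comp hfi.aestronglyMeasurable).mpr hfi

/-- Running maximum `max (S_1, ..., S_{N+1})` of Birkhoff sums. -/
noncomputable def maxS (F : Ω → Ω) (f : Ω → ℝ) : ℕ → Ω → ℝ
  | 0 => f
  | (N + 1) => fun ω => max (maxS F f N ω) (birkhoffSum F f (N + 2) ω)

lemma maxS_le_iff {F : Ω → Ω} {f : Ω → ℝ} {N : ℕ} {ω : Ω} {c : ℝ} :
    maxS F f N ω ≤ c ↔ ∀ n, n ≤ N → birkhoffSum F f (n + 1) ω ≤ c := by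
  induction N with
  | zero =>
      simp only [maxS, Nat.le_zero]
      constructor
      · intro h n hn
        subst hn
        rw [birkhoffSum_one]
        exact h
      · intro h
        have := h 0 rfl
        rwa [birkhoffSum_one] at this
  | succ N ih =>
      simp only [maxS, max_le_iff, ih]
      constructor
      · rintro ⟨hA, hb⟩ n hn
        rcases Nat.lt_or_ge n (N + 1) with h | h
        · exact hA n (by omega)
        · have : n = N + 1 := by omega
          subst this
          exact hb
      · intro h
        exact ⟨fun n hn => h n (by omega), h (N + 1) le_rfl⟩

lemma le_maxS {F : Ω → Ω} {f : Ω → ℝ} {n N : ℕ} {ω : Ω} (hn : n ≤ N) :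
    birkhoffSum F f (n + 1) ω ≤ maxS F f N ω :=
  maxS_le_iff.mp le_rfl n hn

lemma maxS_measurable {F : Ω → Ω} {f : Ω → ℝ} (hF : Measurable F) (hf : Measurable f) (N : ℕ) :
    Measurable (maxS F f N) := by
  induction N with
  | zero => simpa [maxS] using hf
  | succ N ih =>
      simp only [maxS]
      exact ih.max (birkhoffSum_measurable hF hf (N + 2))

lemma maxS_integrable {P : Measure Ω} {F : Ω → Ω} {f : Ω → ℝ}
    (hF : MeasurePreserving F P P) (hfi : Integrable f P) (N : ℕ) :
    Integrable (maxS F f N) P := by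
  induction N with
  | zero => simpa [maxS] using hfi
  | succ N ih =>
      have h := ih.sup (birkhoffSum_integrable hF hfi (N + 2))
      simp only [maxS]
      have e : (maxS F f N ⊔ birkhoffSum F f (N + 2))
          = fun ω => max (maxS F f N ω) (birkhoffSum F f (N + 2) ω) := by
        funext ω
        simp [Pi.sup_apply]
      rwa [e] at h

lemma maxS_key (F : Ω → Ω) (f : Ω → ℝ) (N : ℕ) (ω : Ω) :
    maxS F f N ω ≤ f ω + max (maxS F f N (F ω)) 0 := by
  rw [maxS_le_iff]
  intro n hn
  rw [birkhoffSum_succ']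
  have : birkhoffSum F f n (F ω) ≤ max (maxS F f N (F ω)) 0 := by
    cases n with
    | zero =>
        rw [birkhoffSum_zero]
        exact le_max_right _ _
    | succ m =>
        exact le_trans (le_maxS (by omega)) (le_max_left _ _)
  linarith

theorem maximal_ergodic (P : Measure Ω) [IsProbabilityMeasure P] {F : Ω → Ω}
    (hF : MeasurePreserving F P P) {f : Ω → ℝ} (hfm : Measurable f) (hfi : Integrable f P) :
    0 ≤ ∫ ω in {ω | ∃ n : ℕ, 0 < birkhoffSum F f (n + 1) ω}, f ω ∂P := by
  set E : ℕ → Set Ω := fun N => {ω | 0 < maxS F f N ω} with hE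
  have hMm : ∀ N, Measurable (maxS F f N) := maxS_measurable hF.measurable hfm
  have hMi : ∀ N, Integrable (maxS F f N) P := maxS_integrable hF hfi
  have hEm : ∀ N, MeasurableSet (E N) := fun N => measurableSet_lt measurable_const (hMm N)
  have hmono : Monotone E := by
    intro a b hab ω hω
    exact lt_of_lt_of_le hω (maxS_le_iff.mpr fun n hn => le_maxS (hn.trans hab))
  have hunion : ⋃ N, E N = {ω | ∃ n : ℕ, 0 < birkhoffSum F f (n + 1) ω} := by
    ext ω
    simp only [hE, Set.mem_iUnion, Set.mem_setOf_eq]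
    constructor
    · rintro ⟨N, hN⟩
      by_contra hcon
      push_neg at hcon
      exact absurd hN (not_lt.mpr (maxS_le_iff.mpr fun n _ => hcon n))
    · rintro ⟨n, hn⟩
      exact ⟨n, lt_of_lt_of_le hn (le_maxS le_rfl)⟩
  have step : ∀ N, 0 ≤ ∫ ω in E N, f ω ∂P := by
    intro N
    set M := maxS F f N with hM
    set Mp : Ω → ℝ := fun ω => max (M ω) 0 with hMp
    have hMpm : Measurable Mp := (hMm N).max measurable_const
    have hMpi : Integrable Mp P := (hMi N).pos_part
    have hMpF : Integrable (fun ω => Mp (F ω)) P :=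
      (hF.integrable_comp hMpi.aestronglyMeasurable).mpr hMpi
    have hMpF0 : 0 ≤ᵐ[P] fun ω => Mp (F ω) :=
      Filter.Eventually.of_forall fun ω => le_max_right _ _
    have hpt : ∀ ω ∈ E N, M ω - Mp (F ω) ≤ f ω := by
      intro ω _
      have := maxS_key F f N ω
      simp only [← hM, ← hMp] at this ⊢
      linarith
    have int1 : ∫ ω in E N, (M ω - Mp (F ω)) ∂P ≤ ∫ ω in E N, f ω ∂P :=
      setIntegral_mono_on ((hMi N).integrableOn.sub hMpF.integrableOn)
        hfi.integrableOn (hEm N) hpt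
    have int2 : ∫ ω in E N, (M ω - Mp (F ω)) ∂P
        = ∫ ω in E N, M ω ∂P - ∫ ω in E N, Mp (F ω) ∂P :=
      integral_sub (hMi N).integrableOn hMpF.integrableOn
    have int3 : ∫ ω in E N, M ω ∂P = ∫ ω, Mp ω ∂P := by
      have e1 : ∫ ω in E N, M ω ∂P = ∫ ω in E N, Mp ω ∂P :=
        setIntegral_congr_fun (hEm N) fun ω hω => (max_eq_left (le_of_lt hω)).symm
      have e2 : ∫ ω in (E N)ᶜ, Mp ω ∂P = 0 := by
        have : ∫ ω in (E N)ᶜ, Mp ω ∂P = ∫ ω in (E N)ᶜ, (0 : ℝ) ∂P := by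
          apply setIntegral_congr_fun (hEm N).compl
          intro ω hω
          have hω' : ¬ (0 < M ω) := hω
          exact max_eq_right (not_lt.mp hω')
        rw [this, integral_zero]
      have e3 := integral_add_compl (hEm N) hMpi
      rw [e1]
      linarith
    have int4 : ∫ ω in E N, Mp (F ω) ∂P ≤ ∫ ω, Mp (F ω) ∂P :=
      setIntegral_le_integral hMpF hMpF0
    have int5 : ∫ ω, Mp (F ω) ∂P = ∫ ω, Mp ω ∂P := by
      have h1 : ∫ ω, Mp ω ∂(Measure.map F P) = ∫ ω, Mp (F ω) ∂P :=
        integral_map hF.measurable.aemeasurable (hF.map_eq ▸ hMpm.aestronglyMeasurable)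
      rw [hF.map_eq] at h1
      exact h1.symm
    linarith
  have hlim := tendsto_setIntegral_of_monotone hEm hmono
    (hunion ▸ hfi.integrableOn :
      IntegrableOn f (⋃ N, E N) P)
  rw [hunion] at hlim
  exact ge_of_tendsto hlim (Eventually.of_forall step)

theorem ae_bounded_of_integral_neg (P : Measure Ω) [IsProbabilityMeasure P] {F : Ω → Ω}
    (hF : Ergodic F P) {f : Ω → ℝ} (hfm : Measurable f) (hfi : Integrable f P)
    (hneg : ∫ ω, f ω ∂P < 0) :
    ∀ᵐ ω ∂P, ∃ C : ℝ, ∀ n : ℕ, birkhoffSum F f (n + 1) ω ≤ C := by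
  have hFm := hF.toMeasurePreserving
  set Cset : Set Ω := ⋂ (m : ℕ), ⋃ (n : ℕ), {ω | (m : ℝ) < birkhoffSum F f (n + 1) ω}
    with hCsetdef
  have hSm : ∀ n, Measurable (birkhoffSum F f n) := birkhoffSum_measurable hFm.measurable hfm
  have hCm : MeasurableSet Cset :=
    MeasurableSet.iInter fun m => MeasurableSet.iUnion fun n =>
      measurableSet_lt measurable_const (hSm _)
  have hmem : ∀ ω, ω ∈ Cset ↔ ∀ M : ℝ, ∃ n : ℕ, M < birkhoffSum F f (n + 1) ω := by
    intro ω
    simp only [hCsetdef, Set.mem_iInter, Set.mem_iUnion, Set.mem_setOf_eq]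
    constructor
    · intro h M
      obtain ⟨m, hm⟩ := exists_nat_gt M
      obtain ⟨n, hn⟩ := h m
      exact ⟨n, hm.trans hn⟩
    · intro h m
      exact h m
  have hinv : F ⁻¹' Cset = Cset := by
    ext ω
    rw [Set.mem_preimage, hmem, hmem]
    constructor
    · intro h M
      obtain ⟨n, hn⟩ := h (M - f ω)
      refine ⟨n + 1, ?_⟩
      rw [birkhoffSum_succ']
      linarith
    · intro h M
      obtain ⟨n, hn⟩ := h (max (M + f ω) (birkhoffSum F f 1 ω))
      have hn1 : birkhoffSum F f 1 ω < birkhoffSum F f (n + 1) ω :=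
        lt_of_le_of_lt (le_max_right _ _) hn
      obtain ⟨m, rfl⟩ : ∃ m, n = m + 1 := by
        rcases n with _ | m
        · exact absurd hn1 (lt_irrefl _)
        · exact ⟨m, rfl⟩
      refine ⟨m, ?_⟩
      have h2 := lt_of_le_of_lt (le_max_left _ _) hn
      rw [birkhoffSum_succ'] at h2
      linarith
  rcases hF.toPreErgodic.ae_empty_or_univ hCm hinv with h | h
  · have hnull : P Cset = 0 := ae_eq_empty.mp h
    have hae : ∀ᵐ ω ∂P, ω ∉ Cset := measure_eq_zero_iff_ae_notMem.mp hnull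
    filter_upwards [hae] with ω hω
    rw [hmem] at hω
    push_neg at hω
    obtain ⟨M, hM⟩ := hω
    exact ⟨M, fun n => hM n⟩
  · exfalso
    have h1 : P Csetᶜ = 0 := ae_eq_univ.mp h
    have hsub : Cset ⊆ {ω | ∃ n : ℕ, 0 < birkhoffSum F f (n + 1) ω} := by
      intro ω hω
      exact (hmem ω).mp hω 0
    have hA : P {ω | ∃ n : ℕ, 0 < birkhoffSum F f (n + 1) ω}ᶜ = 0 :=
      measure_mono_null (Set.compl_subset_compl.mpr hsub) h1
    have heq : ∫ ω in {ω | ∃ n : ℕ, 0 < birkhoffSum F f (n + 1) ω}, f ω ∂P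
        = ∫ ω, f ω ∂P := by
      have hres : P.restrict {ω | ∃ n : ℕ, 0 < birkhoffSum F f (n + 1) ω} = P := by
        rw [Measure.restrict_congr_set (ae_eq_univ.mpr hA), Measure.restrict_univ]
      rw [hres]
    have hmax := maximal_ergodic P hFm hfm hfi
    rw [heq] at hmax
    linarith

lemma birkhoffSum_sub_const (F : Ω → Ω) (f : Ω → ℝ) (c : ℝ) (n : ℕ) (ω : Ω) :
    birkhoffSum F (fun ω => f ω - c) n ω = birkhoffSum F f n ω - n * c := by
  simp [birkhoffSum, Finset.sum_sub_distrib, mul_comm]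

lemma birkhoffSum_const_sub (F : Ω → Ω) (f : Ω → ℝ) (c : ℝ) (n : ℕ) (ω : Ω) :
    birkhoffSum F (fun ω => c - f ω) n ω = n * c - birkhoffSum F f n ω := by
  simp [birkhoffSum, Finset.sum_sub_distrib, mul_comm]

theorem birkhoff_ae (P : Measure Ω) [IsProbabilityMeasure P] {F : Ω → Ω}
    (hF : Ergodic F P) {f : Ω → ℝ} (hfm : Measurable f) (hfi : Integrable f P) :
    ∀ᵐ ω ∂P, Tendsto (fun n : ℕ => birkhoffSum F f n ω / n) atTop
      (nhds (∫ ω, f ω ∂P)) := by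
  set Q := ∫ ω, f ω ∂P with hQdef
  have upper : ∀ m : ℕ, ∀ᵐ ω ∂P, ∃ C : ℝ, ∀ n : ℕ,
      birkhoffSum F f (n + 1) ω ≤ ((n : ℝ) + 1) * (Q + 1 / ((m : ℝ) + 1)) + C := by
    intro m
    have hε : (0 : ℝ) < 1 / ((m : ℝ) + 1) := by positivity
    set c := Q + 1 / ((m : ℝ) + 1) with hcdef
    have h1 : Integrable (fun ω => f ω - c) P := hfi.sub (integrable_const c)
    have h2 : Measurable (fun ω => f ω - c) := hfm.sub measurable_const
    have h3 : ∫ ω, (f ω - c) ∂P < 0 := by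
      rw [integral_sub hfi (integrable_const c), integral_const]
      simp only [probReal_univ, smul_eq_mul, one_mul]
      rw [← hQdef, hcdef]
      linarith
    filter_upwards [ae_bounded_of_integral_neg P hF h2 h1 h3] with ω hω
    obtain ⟨C, hC⟩ := hω
    refine ⟨C, fun n => ?_⟩
    have hn := hC n
    rw [birkhoffSum_sub_const] at hn
    push_cast at hn
    rw [hcdef] at hn ⊢
    linarith
  have lower : ∀ m : ℕ, ∀ᵐ ω ∂P, ∃ C : ℝ, ∀ n : ℕ,
      ((n : ℝ) + 1) * (Q - 1 / ((m : ℝ) + 1)) - C ≤ birkhoffSum F f (n + 1) ω := by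
    intro m
    have hε : (0 : ℝ) < 1 / ((m : ℝ) + 1) := by positivity
    set c := Q - 1 / ((m : ℝ) + 1) with hcdef
    have h1 : Integrable (fun ω => c - f ω) P := (integrable_const c).sub hfi
    have h2 : Measurable (fun ω => c - f ω) := measurable_const.sub hfm
    have h3 : ∫ ω, (c - f ω) ∂P < 0 := by
      rw [integral_sub (integrable_const c) hfi, integral_const]
      simp only [probReal_univ, smul_eq_mul, one_mul]
      rw [← hQdef, hcdef]
      linarith
    filter_upwards [ae_bounded_of_integral_neg P hF h2 h1 h3] with ω hω
    obtain ⟨C, hC⟩ := hω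
    refine ⟨C, fun n => ?_⟩
    have hn := hC n
    rw [birkhoffSum_const_sub] at hn
    push_cast at hn
    rw [hcdef] at hn ⊢
    linarith
  filter_upwards [ae_all_iff.mpr upper, ae_all_iff.mpr lower] with ω hu hl
  apply tendsto_div_of_linear_bound (fun n => birkhoffSum F f n ω) Q
  intro ε hεpos
  obtain ⟨m, hm⟩ := exists_nat_one_div_lt hεpos
  obtain ⟨C₁, hC₁⟩ := hu m
  obtain ⟨C₂, hC₂⟩ := hl m
  refine ⟨max C₁ C₂, fun n => ?_⟩
  have h1 := hC₁ n
  have h2 := hC₂ n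
  have hεm : 1 / ((m : ℝ) + 1) ≤ ε := le_of_lt hm
  have hn0 : (0 : ℝ) ≤ (n : ℝ) + 1 := by positivity
  have hp : ((n : ℝ) + 1) * (1 / ((m : ℝ) + 1)) ≤ ((n : ℝ) + 1) * ε :=
    mul_le_mul_of_nonneg_left hεm hn0
  apply abs_le.mpr
  constructor
  · have := le_max_right C₁ C₂
    nlinarith
  · have := le_max_left C₁ C₂
    nlinarith

end Ergodic

theorem pointwise_iterated_ergodic_two {Ω : Type*} [MeasurableSpace Ω] (P : Measure Ω)
    [IsProbabilityMeasure P] (F : Ω → Ω) (hF : Ergodic F P)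
    (g : Ω → ℝ) (hg : Integrable g P) (Q : ℝ) (hQ : ∫ ω, g ω ∂P = Q) :
    ∀ᵐ ω ∂P,
      Tendsto (fun n : ℕ =>
          (∑ k₂ ∈ Finset.range n, ∑ k₁ ∈ Finset.range k₂, g (F^[k₁] ω) * g (F^[k₂] ω))
            / (n : ℝ) ^ 2)
        atTop (nhds (Q ^ 2 / 2)) := by
  obtain ⟨g', hg'm, hgg'⟩ : ∃ g', StronglyMeasurable g' ∧ g =ᵐ[P] g' :=
    ⟨hg.1.mk g, hg.1.stronglyMeasurable_mk, hg.1.ae_eq_mk⟩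
  have hg'meas : Measurable g' := hg'm.measurable
  have hg'i : Integrable g' P := hg.congr hgg'
  have hQ' : ∫ ω, g' ω ∂P = Q := by
    rw [← integral_congr_ae hgg']
    exact hQ
  have B1 := birkhoff_ae P hF hg'meas hg'i
  have B2 := birkhoff_ae P hF (f := fun ω => |g' ω|) hg'meas.abs hg'i.abs
  set L := ∫ ω, |g' ω| ∂P with hLdef
  have hcomp : ∀ᵐ ω ∂P, ∀ k : ℕ, g (F^[k] ω) = g' (F^[k] ω) := by
    rw [ae_all_iff]
    intro k
    have hmp := hF.toMeasurePreserving.iterate k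
    have h := MeasureTheory.ae_eq_comp (μ := P) hmp.measurable.aemeasurable
      (show g =ᵐ[P.map F^[k]] g' by rw [hmp.map_eq]; exact hgg')
    exact h
  filter_upwards [B1, B2, hcomp] with ω h1 h2 h3
  rw [hQ'] at h1
  have h1' : Tendsto (fun n : ℕ => (∑ k ∈ Finset.range n, g' (F^[k] ω)) / n)
      atTop (nhds Q) := h1
  have h2' : Tendsto (fun n : ℕ => (∑ k ∈ Finset.range n, |g' (F^[k] ω)|) / n)
      atTop (nhds L) := h2
  have hd := double_sum_tendsto (fun k => g' (F^[k] ω)) Q L h1' h2'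
  refine hd.congr fun n => ?_
  congr 1
  apply Finset.sum_congr rfl
  intro k₂ _
  apply Finset.sum_congr rfl
  intro k₁ _
  rw [h3 k₁, h3 k₂]
end

section
/- Let ξ : [0,∞) → ℝ^d be continuous with limsup_{t→∞} t^{-1} ∫_0^t |ξ(s)| ds < ∞ and lim_{t→∞} t^{-1} ∫_0^t ξ(s) ds = Q = (Q_1,...,Q_d), |Q| < ∞. Then for any 1 ≤ i_1,...,i_ν ≤ d, lim_{t→∞} t^{-ν} ∫_{0 ≤ s_1 ≤ ... ≤ s_ν ≤ t} ξ_{i_1}(s_1) ⋯ ξ_{i_ν}(s_ν) ds_1 ⋯ ds_ν = (1/ν!) ∏_{j=1}^ν Q_{i_j}. -/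
open Filter MeasureTheory Set

/-- The iterated integral `∫_{0 ≤ s_1 ≤ ... ≤ s_ν ≤ t} ξ_{i_1}(s_1) ⋯ ξ_{i_ν}(s_ν) ds`. -/
noncomputable def iterIntVec {d : ℕ} (ξ : ℝ → EuclideanSpace ℝ (Fin d)) {ν : ℕ}
    (i : Fin ν → Fin d) (t : ℝ) : ℝ :=
  ∫ s in {s : Fin ν → ℝ | (∀ j, s j ∈ Set.Icc 0 t) ∧ Monotone s},
    ∏ j : Fin ν, ξ (s j) (i j)

def simplexSet (n : ℕ) (t : ℝ) : Set (Fin n → ℝ) :=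
  {s | (∀ j, s j ∈ Set.Icc 0 t) ∧ Monotone s}

lemma isClosed_simplexSet (n : ℕ) (t : ℝ) : IsClosed (simplexSet n t) := by
  have h1 : IsClosed {s : Fin n → ℝ | ∀ j, s j ∈ Set.Icc 0 t} := by
    have : {s : Fin n → ℝ | ∀ j, s j ∈ Set.Icc 0 t} = ⋂ j, (fun s : Fin n → ℝ => s j) ⁻¹' Set.Icc 0 t := by
      ext s; simp
    rw [this]
    exact isClosed_iInter fun j => isClosed_Icc.preimage (continuous_apply j)
  have h2 : IsClosed {s : Fin n → ℝ | Monotone s} := by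
    have : {s : Fin n → ℝ | Monotone s} =
        ⋂ (p : Fin n × Fin n) (_ : p.1 ≤ p.2), {s : Fin n → ℝ | s p.1 ≤ s p.2} := by
      ext s
      simp only [Set.mem_iInter, Set.mem_setOf_eq]
      exact ⟨fun h p hp => h hp, fun h a b hab => h (a, b) hab⟩
    rw [this]
    exact isClosed_iInter fun p => isClosed_iInter fun _ =>
      isClosed_le (continuous_apply p.1) (continuous_apply p.2)
  exact h1.inter h2

lemma isCompact_simplexSet (n : ℕ) (t : ℝ) : IsCompact (simplexSet n t) := by
  have hsub : simplexSet n t ⊆ Set.pi Set.univ (fun _ : Fin n => Set.Icc 0 t) := by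
    intro s hs j _
    exact hs.1 j
  exact (isCompact_univ_pi fun _ => isCompact_Icc).of_isClosed_subset
    (isClosed_simplexSet n t) hsub

lemma measurableSet_simplexSet (n : ℕ) (t : ℝ) : MeasurableSet (simplexSet n t) :=
  (isClosed_simplexSet n t).measurableSet

lemma snoc_mem_simplexSet_iff {n : ℕ} {t u : ℝ} {y : Fin n → ℝ} :
    Fin.snoc y u ∈ simplexSet (n + 1) t ↔ u ∈ Set.Icc 0 t ∧ y ∈ simplexSet n u := by
  constructor
  · rintro ⟨hIcc, hmono⟩
    have hu : (Fin.snoc y u : Fin (n+1) → ℝ) (Fin.last n) = u := Fin.snoc_last _ _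
    have hut : u ∈ Set.Icc 0 t := by rw [← hu]; exact hIcc (Fin.last n)
    refine ⟨hut, ⟨fun j => ?_, fun a b hab => ?_⟩⟩
    · have h1 : (Fin.snoc y u : Fin (n+1) → ℝ) j.castSucc = y j := Fin.snoc_castSucc _ _ _
      have h2 := hmono (Fin.le_last j.castSucc)
      rw [hu, h1] at h2
      exact ⟨by rw [← h1]; exact (hIcc j.castSucc).1, h2⟩
    · have := hmono (show (a.castSucc : Fin (n+1)) ≤ b.castSucc from Fin.castSucc_le_castSucc_iff.2 hab)
      rwa [Fin.snoc_castSucc, Fin.snoc_castSucc] at this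
  · rintro ⟨⟨hu0, hut⟩, hyIcc, hymono⟩
    constructor
    · intro j
      refine Fin.lastCases ?_ (fun j => ?_) j
      · rw [Fin.snoc_last]; exact ⟨hu0, hut⟩
      · rw [Fin.snoc_castSucc]
        exact ⟨(hyIcc j).1, le_trans (hyIcc j).2 hut⟩
    · rw [Fin.monotone_iff_le_succ]
      intro i
      rw [Fin.snoc_castSucc]
      rcases Fin.eq_castSucc_or_eq_last i.succ with ⟨j, hj⟩ | hj
      · rw [hj, Fin.snoc_castSucc]
        refine hymono ?_
        have : i.castSucc < j.castSucc := by rw [← hj]; exact Fin.castSucc_lt_succ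
        exact le_of_lt (Fin.castSucc_lt_castSucc_iff.1 this)
      · rw [hj, Fin.snoc_last]
        exact (hyIcc i).2


noncomputable def iterJ : (n : ℕ) → (Fin n → ℝ → ℝ) → ℝ → ℝ
  | 0, _, _ => 1
  | (n+1), f, t => ∫ u in (0:ℝ)..t, f (Fin.last n) u * iterJ n (fun j => f j.castSucc) u

lemma iterJ_continuous : ∀ (n : ℕ) (f : Fin n → ℝ → ℝ), (∀ j, Continuous (f j)) →
    Continuous (iterJ n f)
  | 0, f, _ => by simpa [iterJ] using continuous_const
  | (n+1), f, hf => by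
    have ih := iterJ_continuous n (fun j => f j.castSucc) (fun j => hf _)
    have hc : Continuous fun u => f (Fin.last n) u * iterJ n (fun j => f j.castSucc) u :=
      (hf _).mul ih
    exact intervalIntegral.continuous_primitive (fun a b => hc.intervalIntegrable a b) 0


lemma setIntegral_simplex_eq_iterJ : ∀ (n : ℕ) (f : Fin n → ℝ → ℝ),
    (∀ j, Continuous (f j)) → ∀ t : ℝ, 0 ≤ t →
    (∫ s in simplexSet n t, ∏ j, f j (s j)) = iterJ n f t
  | 0, f, hf, t, ht => by
    have h1 : simplexSet 0 t = Set.univ := by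
      exact Set.eq_univ_iff_forall.2 fun s => ⟨fun j => j.elim0, fun a _ _ => a.elim0⟩
    rw [h1, Measure.restrict_univ]
    simp only [Finset.univ_eq_empty, Finset.prod_empty, iterJ]
    rw [integral_const]
    rw [volume_pi, measureReal_def, Measure.pi_univ]
    simp
  | (n+1), f, hf, t, ht => by
    classical
    set g : (Fin (n+1) → ℝ) → ℝ := fun s => ∏ j, f j (s j) with hg
    have hgc : Continuous g := by
      apply continuous_finset_prod
      intro j _
      exact (hf j).comp (continuous_apply j)
    set A := simplexSet (n+1) t with hA
    have hAm : MeasurableSet A := measurableSet_simplexSet _ _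
    have hInt : Integrable (A.indicator g) := by
      rw [integrable_indicator_iff hAm]
      exact hgc.continuousOn.integrableOn_compact (isCompact_simplexSet _ _)
    set e := MeasurableEquiv.piFinSuccAbove (fun _ : Fin (n+1) => ℝ) (Fin.last n) with he
    have hmp : MeasurePreserving e volume volume :=
      volume_preserving_piFinSuccAbove (fun _ : Fin (n+1) => ℝ) (Fin.last n)
    have hsymm : ∀ p : ℝ × (Fin n → ℝ), e.symm p = Fin.snoc p.2 p.1 := by
      intro p
      simp [he, MeasurableEquiv.piFinSuccAbove_symm_apply, Fin.insertNthEquiv,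
        Fin.insertNth_last']
    have step1 : (∫ s in A, g s) = ∫ p : ℝ × (Fin n → ℝ), A.indicator g (e.symm p) := by
      rw [← integral_indicator hAm, ← (hmp.symm e).integral_comp']
    have hIntp : Integrable (fun p : ℝ × (Fin n → ℝ) => A.indicator g (e.symm p)) := by
      exact ((hmp.symm e).integrable_comp_emb e.symm.measurableEmbedding).2 hInt
    have hIntp2 : Integrable
        (Function.uncurry fun (u : ℝ) (y : Fin n → ℝ) => A.indicator g (e.symm (u, y)))
        ((volume : Measure ℝ).prod (volume : Measure (Fin n → ℝ))) := by
      exact hIntp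
    have step2 : (∫ p : ℝ × (Fin n → ℝ), A.indicator g (e.symm p)) =
        ∫ u : ℝ, ∫ y : Fin n → ℝ, A.indicator g (e.symm (u, y)) := by
      exact (integral_integral hIntp2).symm
    have inner : ∀ u : ℝ, (∫ y : Fin n → ℝ, A.indicator g (e.symm (u, y))) =
        (Set.Icc 0 t).indicator
          (fun u => f (Fin.last n) u * iterJ n (fun j => f j.castSucc) u) u := by
      intro u
      by_cases hu : u ∈ Set.Icc (0:ℝ) t
      · rw [Set.indicator_of_mem hu]
        have h1 : (fun y : Fin n → ℝ => A.indicator g (e.symm (u, y))) =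
            (simplexSet n u).indicator (fun y => g (Fin.snoc y u)) := by
          funext y
          rw [hsymm]
          by_cases hy : y ∈ simplexSet n u
          · rw [Set.indicator_of_mem hy,
              Set.indicator_of_mem (by exact snoc_mem_simplexSet_iff.2 ⟨hu, hy⟩)]
          · rw [Set.indicator_of_notMem hy, Set.indicator_of_notMem
              (fun hmem => hy (snoc_mem_simplexSet_iff.1 hmem).2)]
        rw [h1, integral_indicator (measurableSet_simplexSet n u)]
        have h2 : ∀ y : Fin n → ℝ, g (Fin.snoc y u) =
            (∏ j : Fin n, f j.castSucc (y j)) * f (Fin.last n) u := by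
          intro y
          simp only [hg, Fin.prod_univ_castSucc, Fin.snoc_castSucc, Fin.snoc_last]
        simp_rw [h2]
        rw [integral_mul_const,
          setIntegral_simplex_eq_iterJ n (fun j => f j.castSucc) (fun j => hf _) u hu.1]
        ring
      · rw [Set.indicator_of_notMem hu]
        have h1 : (fun y : Fin n → ℝ => A.indicator g (e.symm (u, y))) = fun _ => 0 := by
          funext y
          rw [hsymm]
          exact Set.indicator_of_notMem
            (fun hmem => hu (snoc_mem_simplexSet_iff.1 hmem).1) _
        rw [h1, integral_zero]
    calc (∫ s in A, g s) = ∫ u : ℝ, ∫ y : Fin n → ℝ, A.indicator g (e.symm (u, y)) :=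
          step1.trans step2
      _ = ∫ u : ℝ, (Set.Icc 0 t).indicator
            (fun u => f (Fin.last n) u * iterJ n (fun j => f j.castSucc) u) u := by
          simp_rw [inner]
      _ = ∫ u in Set.Icc (0:ℝ) t, f (Fin.last n) u * iterJ n (fun j => f j.castSucc) u := by
          rw [integral_indicator measurableSet_Icc]
      _ = iterJ (n+1) f t := by
          rw [iterJ, intervalIntegral.integral_of_le ht, ← integral_Icc_eq_integral_Ioc]


section AnalysisLemmas
open intervalIntegral

lemma small_div' (k : ℕ) (F : ℝ → ℝ)
    (h : ∀ ε > (0:ℝ), ∃ C : ℝ, ∀ᶠ t in atTop, |F t| ≤ C + ε * t ^ (k+1)) :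
    Tendsto (fun t => F t / t ^ (k+1)) atTop (nhds 0) := by
  rw [NormedAddCommGroup.tendsto_nhds_zero]
  intro ε hε
  obtain ⟨C, hC⟩ := h (ε/2) (half_pos hε)
  have hpow : Tendsto (fun t : ℝ => t ^ (k+1)) atTop atTop :=
    tendsto_pow_atTop (Nat.succ_ne_zero k)
  have h2 : Tendsto (fun t : ℝ => C / t ^ (k+1)) atTop (nhds 0) :=
    tendsto_const_nhds.div_atTop hpow
  have h3 : ∀ᶠ t in atTop, C / t ^ (k+1) < ε / 2 :=
    h2.eventually_lt_const (half_pos hε)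
  filter_upwards [hC, h3, eventually_gt_atTop (0:ℝ)] with t h1 h2' ht
  have htp : (0:ℝ) < t ^ (k+1) := pow_pos ht _
  rw [Real.norm_eq_abs, abs_div, abs_of_pos htp, div_lt_iff₀ htp]
  calc |F t| ≤ C + ε/2 * t ^ (k+1) := h1
    _ < ε/2 * t^(k+1) + ε/2 * t^(k+1) := by
        have := (div_lt_iff₀ htp).1 h2'
        linarith
    _ = ε * t ^ (k+1) := by ring

lemma core_small (k : ℕ) (r : ℝ → ℝ) (hc : Continuous r)
    (hsmall : ∀ ε > (0:ℝ), ∀ᶠ u in atTop, |r u| ≤ ε * u ^ k) :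
    Tendsto (fun t => (∫ u in (0:ℝ)..t, r u) / t ^ (k+1)) atTop (nhds 0) := by
  apply small_div'
  intro ε hε
  obtain ⟨T₀, hT₀⟩ := eventually_atTop.1 (hsmall ε hε)
  set T := max T₀ 1 with hT
  have hT1 : (1:ℝ) ≤ T := le_max_right _ _
  refine ⟨|∫ u in (0:ℝ)..T, r u|, ?_⟩
  filter_upwards [eventually_ge_atTop T] with t htT
  have hsplit : (∫ u in (0:ℝ)..t, r u) =
      (∫ u in (0:ℝ)..T, r u) + ∫ u in T..t, r u :=
    (integral_add_adjacent_intervals (hc.intervalIntegrable _ _)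
      (hc.intervalIntegrable _ _)).symm
  have hb : |∫ u in T..t, r u| ≤ ε * t ^ (k+1) := by
    have h1 : |∫ u in T..t, r u| ≤ ∫ u in T..t, |r u| := by
      rw [← Real.norm_eq_abs (∫ u in T..t, r u)]
      exact norm_integral_le_integral_norm htT
    have h2 : (∫ u in T..t, |r u|) ≤ ∫ u in T..t, ε * t ^ k := by
      apply integral_mono_on htT (hc.abs.intervalIntegrable _ _)
        (continuous_const.intervalIntegrable _ _)
      intro x hx
      calc |r x| ≤ ε * x ^ k := hT₀ x (le_trans (le_max_left _ _) hx.1)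
        _ ≤ ε * t ^ k := by
            apply mul_le_mul_of_nonneg_left _ (le_of_lt hε)
            exact pow_le_pow_left₀ (le_trans zero_le_one (le_trans hT1 hx.1)) hx.2 k
    have h3 : (∫ u in T..t, ε * t ^ k) = ε * t ^ k * (t - T) := by
      rw [intervalIntegral.integral_const]; simp [smul_eq_mul]; ring
    have h4 : ε * t ^ k * (t - T) ≤ ε * t ^ (k+1) := by
      have ht1 : (1:ℝ) ≤ t := le_trans hT1 htT
      have : t - T ≤ t := by linarith [le_trans (le_max_right T₀ 1) htT, hT1,
        (le_max_right T₀ 1 : (1:ℝ) ≤ T)]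
      calc ε * t ^ k * (t - T) ≤ ε * t ^ k * t := by
            apply mul_le_mul_of_nonneg_left this
            positivity
        _ = ε * t ^ (k+1) := by ring
    linarith
  calc |∫ u in (0:ℝ)..t, r u| ≤ |∫ u in (0:ℝ)..T, r u| + |∫ u in T..t, r u| := by
        rw [hsplit]; exact abs_add_le _ _
    _ ≤ |∫ u in (0:ℝ)..T, r u| + ε * t ^ (k+1) := by linarith

lemma ces (k : ℕ) (h : ℝ → ℝ) (hc : Continuous h) (L : ℝ)
    (hlim : Tendsto (fun t => h t / t ^ k) atTop (nhds L)) :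
    Tendsto (fun t => (∫ u in (0:ℝ)..t, h u) / t ^ (k+1)) atTop (nhds (L / (k+1))) := by
  have hsmall : ∀ ε > (0:ℝ), ∀ᶠ u in atTop, |h u - L * u ^ k| ≤ ε * u ^ k := by
    intro ε hε
    have hl0 : Tendsto (fun t => h t / t ^ k - L) atTop (nhds 0) := by
      simpa using hlim.sub_const L
    have := (NormedAddCommGroup.tendsto_nhds_zero.1 hl0) ε hε
    filter_upwards [this, eventually_gt_atTop (0:ℝ)] with u hu hu0
    have hup : (0:ℝ) < u ^ k := pow_pos hu0 _
    have : |h u / u ^ k - L| < ε := by simpa using hu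
    have h2 : h u - L * u ^ k = (h u / u ^ k - L) * u ^ k := by
      field_simp
    rw [h2, abs_mul, abs_of_pos hup]
    exact le_of_lt ((mul_lt_mul_iff_left₀ hup).2 this)
  have hcore := core_small k (fun u => h u - L * u ^ k)
    (hc.sub (continuous_const.mul (continuous_pow k))) hsmall
  have hsplit : ∀ t : ℝ, (∫ u in (0:ℝ)..t, (h u - L * u ^ k)) =
      (∫ u in (0:ℝ)..t, h u) - L * (t ^ (k+1) / (k+1)) := by
    intro t
    rw [intervalIntegral.integral_sub (f := h) (g := fun u => L * u ^ k) (hc.intervalIntegrable _ _)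
      ((continuous_const.mul (continuous_pow k) : Continuous fun u : ℝ => L * u ^ k).intervalIntegrable _ _)]
    rw [intervalIntegral.integral_const_mul, integral_pow]
    ring_nf
  have key2 : Tendsto (fun t => ((∫ u in (0:ℝ)..t, h u) - L * (t ^ (k+1) / (k+1))) / t ^ (k+1))
      atTop (nhds 0) := by
    apply hcore.congr
    intro t
    rw [hsplit]
  have := key2.add (tendsto_const_nhds (x := L / (k+1)) (f := atTop))
  rw [zero_add] at this
  apply this.congr'
  filter_upwards [eventually_gt_atTop (0:ℝ)] with t ht
  have htp : t ^ (k+1) ≠ 0 := ne_of_gt (pow_pos ht _)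
  have hk : ((k:ℝ) + 1) ≠ 0 := by positivity
  field_simp
  ring

lemma mixed (k : ℕ) (f r : ℝ → ℝ) (hfc : Continuous f) (hrc : Continuous r)
    (M : ℝ) (hM : ∀ᶠ t in atTop, (∫ u in (0:ℝ)..t, |f u|) ≤ M * t)
    (hsmall : ∀ ε > (0:ℝ), ∀ᶠ u in atTop, |r u| ≤ ε * u ^ k) :
    Tendsto (fun t => (∫ u in (0:ℝ)..t, f u * r u) / t ^ (k+1)) atTop (nhds 0) := by
  set M' : ℝ := |M| + 1 with hM'
  have hM'pos : (0:ℝ) < M' := by positivity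
  have hM2 : ∀ᶠ t in atTop, (∫ u in (0:ℝ)..t, |f u|) ≤ M' * t := by
    filter_upwards [hM, eventually_ge_atTop (0:ℝ)] with t h1 h2
    calc (∫ u in (0:ℝ)..t, |f u|) ≤ M * t := h1
      _ ≤ M' * t := by
          apply mul_le_mul_of_nonneg_right _ h2
          rw [hM']
          calc M ≤ |M| := le_abs_self M
            _ ≤ |M| + 1 := by linarith
  apply small_div'
  intro ε hε
  have hε' : (0:ℝ) < ε / M' := div_pos hε hM'pos
  obtain ⟨T₀, hT₀⟩ := eventually_atTop.1 ((hsmall (ε/M') hε').and hM2)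
  set T := max T₀ 1 with hT
  have hT1 : (1:ℝ) ≤ T := le_max_right _ _
  refine ⟨|∫ u in (0:ℝ)..T, f u * r u|, ?_⟩
  filter_upwards [eventually_ge_atTop T] with t htT
  have ht1 : (1:ℝ) ≤ t := le_trans hT1 htT
  have ht0 : (0:ℝ) < t := lt_of_lt_of_le one_pos ht1
  have hfr : Continuous fun u => f u * r u := hfc.mul hrc
  have hsplit : (∫ u in (0:ℝ)..t, f u * r u) =
      (∫ u in (0:ℝ)..T, f u * r u) + ∫ u in T..t, f u * r u :=
    (integral_add_adjacent_intervals (hfr.intervalIntegrable _ _)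
      (hfr.intervalIntegrable _ _)).symm
  have hb : |∫ u in T..t, f u * r u| ≤ ε * t ^ (k+1) := by
    have h1 : |∫ u in T..t, f u * r u| ≤ ∫ u in T..t, |f u * r u| := by
      rw [← Real.norm_eq_abs (∫ u in T..t, f u * r u)]
      exact norm_integral_le_integral_norm htT
    have h2 : (∫ u in T..t, |f u * r u|) ≤ ∫ u in T..t, (ε / M') * t ^ k * |f u| := by
      apply integral_mono_on htT ((hfr.abs).intervalIntegrable _ _)
        ((continuous_const.mul hfc.abs).intervalIntegrable _ _)
      intro x hx
      rw [abs_mul]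
      calc |f x| * |r x| ≤ |f x| * ((ε / M') * x ^ k) := by
            apply mul_le_mul_of_nonneg_left _ (abs_nonneg _)
            exact (hT₀ x (le_trans (le_max_left _ _) hx.1)).1
        _ ≤ |f x| * ((ε / M') * t ^ k) := by
            apply mul_le_mul_of_nonneg_left _ (abs_nonneg _)
            apply mul_le_mul_of_nonneg_left _ (le_of_lt hε')
            exact pow_le_pow_left₀ (le_trans zero_le_one (le_trans hT1 hx.1)) hx.2 k
        _ = (ε / M') * t ^ k * |f x| := by ring
    have h3 : (∫ u in T..t, (ε / M') * t ^ k * |f u|) =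
        (ε / M') * t ^ k * ∫ u in T..t, |f u| := intervalIntegral.integral_const_mul _ _
    have h4 : (∫ u in T..t, |f u|) ≤ M' * t := by
      have hsp : (∫ u in (0:ℝ)..t, |f u|) =
          (∫ u in (0:ℝ)..T, |f u|) + ∫ u in T..t, |f u| :=
        (integral_add_adjacent_intervals (hfc.abs.intervalIntegrable _ _)
          (hfc.abs.intervalIntegrable _ _)).symm
      have hpos : (0:ℝ) ≤ ∫ u in (0:ℝ)..T, |f u| :=
        integral_nonneg (le_trans zero_le_one hT1) (fun x _ => abs_nonneg _)
      have := (hT₀ t (le_trans (le_max_left _ _) htT)).2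
      linarith
    have h5 : (ε / M') * t ^ k * ∫ u in T..t, |f u| ≤ (ε / M') * t ^ k * (M' * t) := by
      apply mul_le_mul_of_nonneg_left h4
      positivity
    have h6 : (ε / M') * t ^ k * (M' * t) = ε * t ^ (k+1) := by
      field_simp
      ring
    linarith
  calc |∫ u in (0:ℝ)..t, f u * r u| ≤
        |∫ u in (0:ℝ)..T, f u * r u| + |∫ u in T..t, f u * r u| := by
        rw [hsplit]; exact abs_add_le _ _
    _ ≤ |∫ u in (0:ℝ)..T, f u * r u| + ε * t ^ (k+1) := by linarith

lemma small_of_tendsto {g : ℝ → ℝ} {k : ℕ} {c : ℝ}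
    (hg : Tendsto (fun t => g t / t ^ k) atTop (nhds c)) :
    ∀ ε > (0:ℝ), ∀ᶠ u in atTop, |g u - c * u ^ k| ≤ ε * u ^ k := by
  intro ε hε
  have hl0 : Tendsto (fun t => g t / t ^ k - c) atTop (nhds 0) := by
    simpa using hg.sub_const c
  have := (NormedAddCommGroup.tendsto_nhds_zero.1 hl0) ε hε
  filter_upwards [this, eventually_gt_atTop (0:ℝ)] with u hu hu0
  have hup : (0:ℝ) < u ^ k := pow_pos hu0 _
  have habs : |g u / u ^ k - c| < ε := by simpa using hu
  have h2 : g u - c * u ^ k = (g u / u ^ k - c) * u ^ k := by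
    field_simp
  rw [h2, abs_mul, abs_of_pos hup]
  exact le_of_lt ((mul_lt_mul_iff_left₀ hup).2 habs)

lemma powf (k : ℕ) (f : ℝ → ℝ) (hfc : Continuous f) (q : ℝ)
    (hq : Tendsto (fun t => (∫ u in (0:ℝ)..t, f u) / t) atTop (nhds q)) :
    Tendsto (fun t => (∫ u in (0:ℝ)..t, u ^ k * f u) / t ^ (k+1)) atTop (nhds (q / (k+1))) := by
  rcases k with _ | m
  · simpa using hq
  · set F : ℝ → ℝ := fun t => ∫ u in (0:ℝ)..t, f u with hFdef
    have hF : ∀ x : ℝ, HasDerivAt F (f x) x := by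
      intro x
      exact intervalIntegral.integral_hasDerivAt_right (hfc.intervalIntegrable _ _)
        (hfc.stronglyMeasurableAtFilter _ _) hfc.continuousAt
    have hFc : Continuous F :=
      intervalIntegral.continuous_primitive (fun a b => hfc.intervalIntegrable a b) 0
    have parts : ∀ t : ℝ, (∫ x in (0:ℝ)..t, x ^ (m+1) * f x) =
        t ^ (m+1) * F t - ((m:ℝ)+1) * ∫ x in (0:ℝ)..t, x ^ m * F x := by
      intro t
      have hu : ∀ x ∈ Set.uIcc (0:ℝ) t,
          HasDerivAt (fun y : ℝ => y ^ (m+1)) (((m:ℝ)+1) * x ^ m) x := by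
        intro x _
        simpa using hasDerivAt_pow (m+1) x
      have hv : ∀ x ∈ Set.uIcc (0:ℝ) t, HasDerivAt F (f x) x := fun x _ => hF x
      have := intervalIntegral.integral_mul_deriv_eq_deriv_mul hu hv
        ((continuous_const.mul (continuous_pow m)).intervalIntegrable _ _)
        (hfc.intervalIntegrable _ _)
      have hF0 : F 0 = 0 := intervalIntegral.integral_same
      rw [hF0] at this
      rw [this]
      have : (∫ x in (0:ℝ)..t, ((m:ℝ)+1) * x ^ m * F x) =
          ∫ x in (0:ℝ)..t, ((m:ℝ)+1) * (x ^ m * F x) := by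
        apply intervalIntegral.integral_congr
        intro x _
        ring
      rw [this, intervalIntegral.integral_const_mul]
      ring
    have hces : Tendsto (fun t => (∫ x in (0:ℝ)..t, x ^ m * F x) / t ^ (m+2)) atTop
        (nhds (q / (m+2))) := by
      have hc : Continuous fun x : ℝ => x ^ m * F x := (continuous_pow m).mul hFc
      have hlim : Tendsto (fun x : ℝ => (x ^ m * F x) / x ^ (m+1)) atTop (nhds q) := by
        apply hq.congr'
        filter_upwards [eventually_gt_atTop (0:ℝ)] with x hx
        have hxm : x ^ m ≠ 0 := ne_of_gt (pow_pos hx m)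
        field_simp [pow_succ]
        ring
      have := ces (m+1) (fun x => x ^ m * F x) hc q hlim
      have hcast : ((m:ℝ)+1+1) = ((m:ℝ)+2) := by ring
      simpa [hcast] using this
    have hmain : Tendsto (fun t => F t / t - ((m:ℝ)+1) *
        ((∫ x in (0:ℝ)..t, x ^ m * F x) / t ^ (m+2))) atTop
        (nhds (q - ((m:ℝ)+1) * (q / (m+2)))) :=
      hq.sub (hces.const_mul _)
    have hval : q - ((m:ℝ)+1) * (q / (m+2)) = q / ((m:ℝ)+1+1) := by
      have : ((m:ℝ)+2) ≠ 0 := by positivity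
      field_simp
      ring
    rw [hval] at hmain
    have : Tendsto (fun t => (∫ u in (0:ℝ)..t, u ^ (m+1) * f u) / t ^ (m+2)) atTop
        (nhds (q / ((m:ℝ)+1+1))) := by
      apply hmain.congr'
      filter_upwards [eventually_gt_atTop (0:ℝ)] with t ht
      have htne : t ≠ 0 := ne_of_gt ht
      rw [parts t]
      field_simp
      ring
    simpa [Nat.cast_succ] using this

lemma key_lemma (k : ℕ) (f g : ℝ → ℝ) (hfc : Continuous f) (hgc : Continuous g)
    (q c M : ℝ)
    (hq : Tendsto (fun t => (∫ u in (0:ℝ)..t, f u) / t) atTop (nhds q))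
    (hM : ∀ᶠ t in atTop, (∫ u in (0:ℝ)..t, |f u|) ≤ M * t)
    (hg : Tendsto (fun t => g t / t ^ k) atTop (nhds c)) :
    Tendsto (fun t => (∫ u in (0:ℝ)..t, f u * g u) / t ^ (k+1)) atTop
      (nhds (q * c / (k+1))) := by
  have hrc : Continuous fun u : ℝ => g u - c * u ^ k :=
    hgc.sub (continuous_const.mul (continuous_pow k))
  have h1 := mixed k f (fun u => g u - c * u ^ k) hfc hrc M hM (small_of_tendsto hg)
  have h2 := (powf k f hfc q hq).const_mul c
  have hsum := h2.add h1
  rw [add_zero] at hsum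
  have hval : c * (q / (k+1)) = q * c / (k+1) := by ring
  rw [hval] at hsum
  apply hsum.congr
  intro t
  have hsplit : (∫ u in (0:ℝ)..t, f u * g u) =
      c * (∫ u in (0:ℝ)..t, u ^ k * f u) + ∫ u in (0:ℝ)..t, f u * (g u - c * u ^ k) := by
    rw [← intervalIntegral.integral_const_mul, ← intervalIntegral.integral_add (f := fun x => c * (x ^ k * f x)) (g := fun u => f u * (g u - c * u ^ k))
      ((continuous_const.mul ((continuous_pow k).mul hfc) : Continuous fun x : ℝ => c * (x ^ k * f x)).intervalIntegrable _ _)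
      ((hfc.mul hrc : Continuous fun u => f u * (g u - c * u ^ k)).intervalIntegrable _ _)]
    apply intervalIntegral.integral_congr
    intro x _
    ring
  rw [hsplit, add_div, mul_div_assoc]


end AnalysisLemmas

section Assembly

variable {d : ℕ} (ξ : ℝ → EuclideanSpace ℝ (Fin d)) (Q : EuclideanSpace ℝ (Fin d))

lemma abs_coord_le_norm (x : EuclideanSpace ℝ (Fin d)) (i : Fin d) : |x i| ≤ ‖x‖ := by
  rw [EuclideanSpace.norm_eq x]
  have h1 : |x i| = Real.sqrt (‖x i‖^2) := by rw [Real.sqrt_sq_eq_abs]; simp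
  rw [h1]
  apply Real.sqrt_le_sqrt
  exact Finset.single_le_sum (f := fun j => ‖x j‖^2) (fun j _ => sq_nonneg _)
    (Finset.mem_univ i)

theorem coord_limits (hcont : ContinuousOn ξ (Set.Ici 0))
    (hbdd : Filter.IsBoundedUnder (· ≤ ·) atTop
      (fun t : ℝ => (∫ s in Set.Icc (0:ℝ) t, ‖ξ s‖) / t))
    (hQ : Tendsto (fun t : ℝ => t⁻¹ • ∫ s in Set.Icc (0:ℝ) t, ξ s) atTop (nhds Q)) :
    ∀ n : ℕ, ∀ i : Fin n → Fin d,
      Tendsto (fun t : ℝ => iterJ n (fun j u => ξ (max u 0) (i j)) t / t ^ n) atTop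
        (nhds ((∏ j : Fin n, Q (i j)) / (Nat.factorial n : ℝ))) := by
  have hη : Continuous fun s : ℝ => ξ (max s 0) :=
    hcont.comp_continuous (continuous_id.max continuous_const)
      (fun s => Set.mem_Ici.2 (le_max_right s 0))
  have hfc : ∀ m : Fin d, Continuous fun u : ℝ => ξ (max u 0) m := by
    intro m
    exact (EuclideanSpace.proj m).continuous.comp hη
  -- integrability of ξ on Icc 0 t, t ≥ 0
  have hint : ∀ t : ℝ, 0 ≤ t → IntegrableOn ξ (Set.Icc 0 t) := by
    intro t ht
    exact (hcont.mono (Set.Icc_subset_Ici_self)).integrableOn_compact isCompact_Icc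
  -- equality of interval integrals with set integrals for each coordinate
  have hIccEq : ∀ (m : Fin d) (t : ℝ), 0 ≤ t →
      (∫ u in (0:ℝ)..t, ξ (max u 0) m) = ∫ s in Set.Icc (0:ℝ) t, ξ s m := by
    intro m t ht
    rw [intervalIntegral.integral_of_le ht, ← integral_Icc_eq_integral_Ioc]
    apply setIntegral_congr_fun measurableSet_Icc
    intro u hu
    show ξ (max u 0) m = ξ u m
    rw [max_eq_left hu.1]
  -- coordinate limit from hQ
  have hq : ∀ m : Fin d,
      Tendsto (fun t => (∫ u in (0:ℝ)..t, ξ (max u 0) m) / t) atTop (nhds (Q m)) := by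
    intro m
    have h1 : Tendsto (fun t : ℝ => (EuclideanSpace.proj m)
        (t⁻¹ • ∫ s in Set.Icc (0:ℝ) t, ξ s)) atTop (nhds ((EuclideanSpace.proj m) Q)) :=
      ((EuclideanSpace.proj m).continuous.tendsto Q).comp hQ
    apply h1.congr'
    filter_upwards [eventually_ge_atTop (0:ℝ)] with t ht
    rw [_root_.map_smul]
    have h2 : (EuclideanSpace.proj m) (∫ s in Set.Icc (0:ℝ) t, ξ s) =
        ∫ s in Set.Icc (0:ℝ) t, ξ s m :=
      (ContinuousLinearMap.integral_comp_comm _ (hint t ht)).symm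
    rw [h2, smul_eq_mul, hIccEq m t ht, inv_mul_eq_div]
  -- bound for each coordinate
  have hM : ∀ m : Fin d, ∃ M : ℝ, ∀ᶠ t in atTop,
      (∫ u in (0:ℝ)..t, |ξ (max u 0) m|) ≤ M * t := by
    intro m
    obtain ⟨M, hM⟩ := hbdd
    rw [eventually_map] at hM
    refine ⟨M, ?_⟩
    filter_upwards [hM, eventually_gt_atTop (0:ℝ)] with t h1 ht
    have hnorm : (∫ u in (0:ℝ)..t, ‖ξ (max u 0)‖) = ∫ s in Set.Icc (0:ℝ) t, ‖ξ s‖ := by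
      rw [intervalIntegral.integral_of_le (le_of_lt ht), ← integral_Icc_eq_integral_Ioc]
      apply setIntegral_congr_fun measurableSet_Icc
      intro u hu
      show ‖ξ (max u 0)‖ = ‖ξ u‖
      rw [max_eq_left hu.1]
    have hmono : (∫ u in (0:ℝ)..t, |ξ (max u 0) m|) ≤ ∫ u in (0:ℝ)..t, ‖ξ (max u 0)‖ := by
      apply intervalIntegral.integral_mono_on (le_of_lt ht)
        ((hfc m).abs.intervalIntegrable _ _) ((hη.norm).intervalIntegrable _ _)
      intro x _
      exact abs_coord_le_norm _ _
    calc (∫ u in (0:ℝ)..t, |ξ (max u 0) m|) ≤ ∫ s in Set.Icc (0:ℝ) t, ‖ξ s‖ := by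
          rw [← hnorm]; exact hmono
      _ ≤ M * t := by
          rw [← div_le_iff₀ ht] at *
          exact h1
  -- main induction
  intro n
  induction n with
  | zero =>
    intro i
    simp only [iterJ, pow_zero, Nat.factorial_zero, Nat.cast_one]
    simpa using tendsto_const_nhds
  | succ n ih =>
    intro i
    obtain ⟨M, hMf⟩ := hM (i (Fin.last n))
    have hg := ih (fun j => i j.castSucc)
    have hkey := key_lemma n (fun u => ξ (max u 0) (i (Fin.last n)))
      (iterJ n (fun j u => ξ (max u 0) (i j.castSucc)))
      (hfc _) (iterJ_continuous n _ (fun j => hfc _))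
      (Q (i (Fin.last n))) ((∏ j : Fin n, Q (i j.castSucc)) / (Nat.factorial n : ℝ)) M
      (hq _) hMf hg
    have hval : Q (i (Fin.last n)) * ((∏ j : Fin n, Q (i j.castSucc)) /
        (Nat.factorial n : ℝ)) / ((n : ℝ) + 1) =
        (∏ j : Fin (n+1), Q (i j)) / (Nat.factorial (n+1) : ℝ) := by
      rw [Fin.prod_univ_castSucc, Nat.factorial_succ]
      push_cast
      have h1 : (Nat.factorial n : ℝ) ≠ 0 := Nat.cast_ne_zero.2 (Nat.factorial_ne_zero n)
      field_simp
    rw [← hval]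
    exact hkey

end Assembly

theorem iterated_ergodic_integral_vector {d : ℕ} (ξ : ℝ → EuclideanSpace ℝ (Fin d))
    (Q : EuclideanSpace ℝ (Fin d))
    (hcont : ContinuousOn ξ (Set.Ici 0))
    (hbdd : Filter.IsBoundedUnder (· ≤ ·) atTop
      (fun t : ℝ => (∫ s in Set.Icc (0:ℝ) t, ‖ξ s‖) / t))
    (hQ : Tendsto (fun t : ℝ => t⁻¹ • ∫ s in Set.Icc (0:ℝ) t, ξ s) atTop (nhds Q)) :
    ∀ ν : ℕ, 1 ≤ ν → ∀ i : Fin ν → Fin d,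
      Tendsto (fun t : ℝ => iterIntVec ξ i t / t ^ ν) atTop
        (nhds ((∏ j : Fin ν, Q (i j)) / (Nat.factorial ν : ℝ))) := by
  intro ν _ i
  have hη : Continuous fun s : ℝ => ξ (max s 0) :=
    hcont.comp_continuous (continuous_id.max continuous_const)
      (fun s => Set.mem_Ici.2 (le_max_right s 0))
  have hfc : ∀ j : Fin ν, Continuous fun u : ℝ => ξ (max u 0) (i j) := by
    intro j
    exact (EuclideanSpace.proj (i j)).continuous.comp hη
  have hmain := coord_limits ξ Q hcont hbdd hQ ν i
  apply hmain.congr'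
  filter_upwards [eventually_ge_atTop (0:ℝ)] with t ht
  congr 1
  have h1 : iterIntVec ξ i t = ∫ s in simplexSet ν t, ∏ j : Fin ν, ξ (max (s j) 0) (i j) := by
    apply setIntegral_congr_fun (measurableSet_simplexSet ν t)
    intro s hs
    show (∏ j : Fin ν, ξ (s j) (i j)) = ∏ j : Fin ν, ξ (max (s j) 0) (i j)
    apply Finset.prod_congr rfl
    intro j _
    rw [max_eq_left (hs.1 j).1]
  exact (h1.trans
    (setIntegral_simplex_eq_iterJ ν (fun j u => ξ (max u 0) (i j)) hfc t ht)).symm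
end
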